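/- arXiv:2604.10364 — 12 statements merged into one kernel-verified Lean document; each statement's English description precedes it below -/
import Mathlib

section
/- Let ℓ ≥ 2 and consider the game NN(2ℓ, ℓ). If a position p lies in S_ℓ and p' is obtained from p by a legal move of NN(2ℓ, ℓ), then p' does not lie in S_ℓ. (In other words, no legal move leads from S_ℓ to S_ℓ.) -/
/-- Window sum `s i = p i + p (i+1) + ... + p (i+ℓ-2)` for the game NN(2ℓ, ℓ). -/
def window (ℓ : ℕ) (p : ℕ → ℕ) (i : ℕ) : ℕ := ∑ j ∈ Finset.Icc i (i + ℓ - 2), p j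

/-- `s* = min` of the window sums `s i` over `i = 2, ..., ℓ+1` for NN(2ℓ, ℓ). -/
noncomputable def sstar (ℓ : ℕ) (p : ℕ → ℕ) : ℕ :=
  sInf {x | ∃ i, 2 ≤ i ∧ i ≤ ℓ + 1 ∧ x = window ℓ p i}

/-- The set `S_ℓ` for NN(2ℓ, ℓ): the sum equation (SE) `A = B` and the
minimum equation (ME) `m = s*`. -/
def memS (ℓ : ℕ) (p : ℕ → ℕ) : Prop :=
  (∑ i ∈ Finset.Icc 1 ℓ, p i) = (∑ i ∈ Finset.Icc (ℓ + 1) (2 * ℓ), p i) ∧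
  min (p 1) (p (2 * ℓ)) = sstar ℓ p

/-- The allowed move sets of NN(n, k): the k-element intervals
`{i, i+1, ..., i+k-1}` for `i = 1, ..., n-k+1`, and the end set `{1, n}`. -/
def Allowed (n k : ℕ) (M : Finset ℕ) : Prop :=
  (∃ i, 1 ≤ i ∧ i + k - 1 ≤ n ∧ M = Finset.Icc i (i + k - 1)) ∨ M = {1, n}

/-- A legal move of NN(n, k) from `p` to `p'`: every stack weakly decreases,
some stack strictly decreases, and the set of stacks that decrease is
contained in some allowed move set. -/
def LegalMove (n k : ℕ) (p p' : ℕ → ℕ) : Prop :=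
  (∀ j ∈ Finset.Icc 1 n, p' j ≤ p j) ∧
  (∃ j ∈ Finset.Icc 1 n, p' j < p j) ∧
  (∃ M : Finset ℕ, Allowed n k M ∧ ∀ j ∈ Finset.Icc 1 n, p' j < p j → j ∈ M)

lemma sstar_le (ℓ : ℕ) (p : ℕ → ℕ) {i : ℕ} (h1 : 2 ≤ i) (h2 : i ≤ ℓ + 1) :
    sstar ℓ p ≤ window ℓ p i :=
  Nat.sInf_le ⟨i, h1, h2, rfl⟩

lemma sstar_mem (ℓ : ℕ) (p : ℕ → ℕ) (hℓ : 1 ≤ ℓ) :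
    ∃ i, 2 ≤ i ∧ i ≤ ℓ + 1 ∧ sstar ℓ p = window ℓ p i := by
  have hne : {x | ∃ i, 2 ≤ i ∧ i ≤ ℓ + 1 ∧ x = window ℓ p i}.Nonempty :=
    ⟨window ℓ p 2, 2, le_refl 2, by omega, rfl⟩
  exact Nat.sInf_mem hne

theorem nn_even_no_move_from_S_to_S' (ℓ : ℕ) (hℓ : 2 ≤ ℓ) (p p' : ℕ → ℕ)
    (hp : memS ℓ p) (hmove : LegalMove (2 * ℓ) ℓ p p') : ¬ memS ℓ p' := by
  obtain ⟨hSE, hME⟩ := hp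
  obtain ⟨hle, ⟨j0, hj0mem, hj0lt⟩, M, hAll, hMsub⟩ := hmove
  rintro ⟨hSE', hME'⟩
  simp only [Finset.mem_Icc] at hj0mem
  have hle1 : ∀ j ∈ Finset.Icc 1 ℓ, p' j ≤ p j := by
    intro j hj; simp only [Finset.mem_Icc] at hj
    exact hle j (by simp only [Finset.mem_Icc]; omega)
  have hle2 : ∀ j ∈ Finset.Icc (ℓ+1) (2*ℓ), p' j ≤ p j := by
    intro j hj; simp only [Finset.mem_Icc] at hj
    exact hle j (by simp only [Finset.mem_Icc]; omega)
  -- strict decrease exists in both halves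
  have hex1 : ∃ u, 1 ≤ u ∧ u ≤ ℓ ∧ p' u < p u := by
    by_contra h
    push_neg at h
    have hAeq : ∑ i ∈ Finset.Icc 1 ℓ, p' i = ∑ i ∈ Finset.Icc 1 ℓ, p i := by
      refine le_antisymm (Finset.sum_le_sum hle1) (Finset.sum_le_sum ?_)
      intro j hj; simp only [Finset.mem_Icc] at hj
      exact h j hj.1 hj.2
    have hj0' : ℓ + 1 ≤ j0 := by
      by_contra hc
      exact absurd hj0lt (not_lt_of_ge (h j0 hj0mem.1 (by omega)))
    have hBlt : ∑ i ∈ Finset.Icc (ℓ+1) (2*ℓ), p' i < ∑ i ∈ Finset.Icc (ℓ+1) (2*ℓ), p i :=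
      Finset.sum_lt_sum hle2 ⟨j0, by simp only [Finset.mem_Icc]; omega, hj0lt⟩
    omega
  have hex2 : ∃ v, ℓ + 1 ≤ v ∧ v ≤ 2*ℓ ∧ p' v < p v := by
    by_contra h
    push_neg at h
    have hBeq : ∑ i ∈ Finset.Icc (ℓ+1) (2*ℓ), p' i = ∑ i ∈ Finset.Icc (ℓ+1) (2*ℓ), p i := by
      refine le_antisymm (Finset.sum_le_sum hle2) (Finset.sum_le_sum ?_)
      intro j hj; simp only [Finset.mem_Icc] at hj
      exact h j hj.1 hj.2
    have hj0' : j0 ≤ ℓ := by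
      by_contra hc
      exact absurd hj0lt (not_lt_of_ge (h j0 (by omega) hj0mem.2))
    have hAlt : ∑ i ∈ Finset.Icc 1 ℓ, p' i < ∑ i ∈ Finset.Icc 1 ℓ, p i :=
      Finset.sum_lt_sum hle1 ⟨j0, by simp only [Finset.mem_Icc]; omega, hj0lt⟩
    omega
  obtain ⟨u, hu1, hu2, hult⟩ := hex1
  obtain ⟨v, hv1, hv2, hvlt⟩ := hex2
  rcases hAll with ⟨i, hi1, hi2, hMeq⟩ | hMeq
  · -- interval move set
    subst hMeq
    have hu : i ≤ u ∧ u ≤ i + ℓ - 1 := by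
      have := hMsub u (by simp only [Finset.mem_Icc]; omega) hult
      simpa [Finset.mem_Icc] using this
    have hv : i ≤ v ∧ v ≤ i + ℓ - 1 := by
      have := hMsub v (by simp only [Finset.mem_Icc]; omega) hvlt
      simpa [Finset.mem_Icc] using this
    have e1 : p' 1 = p 1 := by
      by_contra h
      have hlt : p' 1 < p 1 :=
        lt_of_le_of_ne (hle 1 (by simp only [Finset.mem_Icc]; omega)) h
      have := hMsub 1 (by simp only [Finset.mem_Icc]; omega) hlt
      simp only [Finset.mem_Icc] at this
      omega
    have e2 : p' (2*ℓ) = p (2*ℓ) := by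
      by_contra h
      have hlt : p' (2*ℓ) < p (2*ℓ) :=
        lt_of_le_of_ne (hle (2*ℓ) (by simp only [Finset.mem_Icc]; omega)) h
      have := hMsub (2*ℓ) (by simp only [Finset.mem_Icc]; omega) hlt
      simp only [Finset.mem_Icc] at this
      omega
    have hwin : ∀ j, 2 ≤ j → j ≤ ℓ + 1 → window ℓ p' j < window ℓ p j := by
      intro j hj2 hjl
      apply Finset.sum_lt_sum
      · intro k hk; simp only [Finset.mem_Icc] at hk
        exact hle k (by simp only [Finset.mem_Icc]; omega)
      · by_cases hc : j ≤ u
        · exact ⟨u, by simp only [Finset.mem_Icc]; omega, hult⟩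
        · exact ⟨v, by simp only [Finset.mem_Icc]; omega, hvlt⟩
    obtain ⟨j1, hj1a, hj1b, hj1e⟩ := sstar_mem ℓ p (by omega)
    have h1 : sstar ℓ p' ≤ window ℓ p' j1 := sstar_le ℓ p' hj1a hj1b
    have h2 : window ℓ p' j1 < window ℓ p j1 := hwin j1 hj1a hj1b
    have hlt : sstar ℓ p' < sstar ℓ p := by
      rw [hj1e]; exact lt_of_le_of_lt h1 h2
    rw [e1, e2] at hME'
    have : sstar ℓ p = sstar ℓ p' := hME.symm.trans hME'
    omega
  · -- end move set {1, 2ℓ}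
    subst hMeq
    have hu' : u = 1 := by
      have := hMsub u (by simp only [Finset.mem_Icc]; omega) hult
      simp only [Finset.mem_insert, Finset.mem_singleton] at this
      omega
    have hv' : v = 2*ℓ := by
      have := hMsub v (by simp only [Finset.mem_Icc]; omega) hvlt
      simp only [Finset.mem_insert, Finset.mem_singleton] at this
      omega
    subst hu'; subst hv'
    have hint : ∀ k, 2 ≤ k → k ≤ 2*ℓ - 1 → p' k = p k := by
      intro k hk1 hk2
      by_contra h
      have hlt : p' k < p k :=
        lt_of_le_of_ne (hle k (by simp only [Finset.mem_Icc]; omega)) h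
      have := hMsub k (by simp only [Finset.mem_Icc]; omega) hlt
      simp only [Finset.mem_insert, Finset.mem_singleton] at this
      omega
    have hwineq : ∀ i, 2 ≤ i → i ≤ ℓ + 1 → window ℓ p' i = window ℓ p i := by
      intro i hi1 hi2
      refine Finset.sum_congr rfl ?_
      intro k hk; simp only [Finset.mem_Icc] at hk
      exact hint k (by omega) (by omega)
    have hss : sstar ℓ p' = sstar ℓ p := by
      unfold sstar
      congr 1
      ext x
      constructor
      · rintro ⟨i, h1, h2, rfl⟩; exact ⟨i, h1, h2, hwineq i h1 h2⟩
      · rintro ⟨i, h1, h2, rfl⟩; exact ⟨i, h1, h2, (hwineq i h1 h2).symm⟩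
    have hmin : min (p' 1) (p' (2*ℓ)) < min (p 1) (p (2*ℓ)) :=
      lt_min (lt_of_le_of_lt (min_le_left _ _) hult)
        (lt_of_le_of_lt (min_le_right _ _) hvlt)
    have : min (p' 1) (p' (2*ℓ)) = min (p 1) (p (2*ℓ)) :=
      hME'.trans (hss.trans hME.symm)
    omega

/-- In NN(2ℓ, ℓ) with ℓ ≥ 2, no legal move leads from `S_ℓ` to `S_ℓ`. -/
theorem nn_even_no_move_from_S_to_S (ℓ : ℕ) (hℓ : 2 ≤ ℓ) (p p' : ℕ → ℕ)
    (hp : memS ℓ p) (hmove : LegalMove (2 * ℓ) ℓ p p') : ¬ memS ℓ p' :=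
  nn_even_no_move_from_S_to_S' ℓ hℓ p p' hp hmove
end

section
/- Let ℓ ≥ 1 and let z be the 0-1 vector of length 2ℓ+1 with entries 1 exactly at positions 1, ℓ+1, and 2ℓ+1. For any position p of NN(2ℓ+1, ℓ+1) and any natural number t with t ≤ p_1, t ≤ p_{ℓ+1}, and t ≤ p_{2ℓ+1}, the position p lies in S_ℓ if and only if p - t·z lies in S_ℓ. (The symmetric vector z is invariant for S_ℓ.) -/
/-- Window sum `s i = p i + p (i+1) + ... + p (i+ℓ-1)` for the game NN(2ℓ+1, ℓ+1). -/
def windowOdd (ℓ : ℕ) (p : ℕ → ℕ) (i : ℕ) : ℕ := ∑ j ∈ Finset.Icc i (i + ℓ - 1), p j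

/-- `s* = min` of the window sums `s i` over `i = 2, ..., ℓ+1` for NN(2ℓ+1, ℓ+1). -/
noncomputable def sstarOdd (ℓ : ℕ) (p : ℕ → ℕ) : ℕ :=
  sInf {x | ∃ i, 2 ≤ i ∧ i ≤ ℓ + 1 ∧ x = windowOdd ℓ p i}

/-- The set `S_ℓ` for NN(2ℓ+1, ℓ+1): the sum equation (SE) `A = B` and the
minimum equation (ME) `m = s*`. -/
def memSOdd (ℓ : ℕ) (p : ℕ → ℕ) : Prop :=
  (∑ i ∈ Finset.Icc 1 ℓ, p i) = (∑ i ∈ Finset.Icc (ℓ + 2) (2 * ℓ + 1), p i) ∧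
  min (p 1) (p (2 * ℓ + 1)) = sstarOdd ℓ p

/-- For ℓ ≥ 1, the 0-1 vector with ones exactly at positions
1, ℓ+1, 2ℓ+1 is invariant for `S_ℓ` in NN(2ℓ+1, ℓ+1): subtracting t copies of it
(componentwise, with t at most each affected stack) preserves membership in `S_ℓ`. -/
theorem invariant_vector_odd (ℓ : ℕ) (hℓ : 1 ≤ ℓ) (p : ℕ → ℕ) (t : ℕ)
    (h1 : t ≤ p 1) (h2 : t ≤ p (ℓ + 1)) (h3 : t ≤ p (2 * ℓ + 1)) :
    memSOdd ℓ p ↔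
      memSOdd ℓ (fun j =>
        p j - t * (if j = 1 ∨ j = ℓ + 1 ∨ j = 2 * ℓ + 1 then 1 else 0)) := by
  set q : ℕ → ℕ :=
    (fun j => p j - t * (if j = 1 ∨ j = ℓ + 1 ∨ j = 2 * ℓ + 1 then 1 else 0)) with hq
  have hq1 : q 1 = p 1 - t := by simp [hq]
  have hqm : q (ℓ + 1) = p (ℓ + 1) - t := by simp [hq]
  have hqr : q (2 * ℓ + 1) = p (2 * ℓ + 1) - t := by simp [hq]
  have hqo : ∀ j, j ≠ 1 → j ≠ ℓ + 1 → j ≠ 2 * ℓ + 1 → q j = p j := by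
    intro j hj1 hj2 hj3; simp [hq, hj1, hj2, hj3]
  -- A sums
  have h1m : (1 : ℕ) ∈ Finset.Icc 1 ℓ := by simp [Finset.mem_Icc, hℓ]
  have eA1 := Finset.add_sum_erase _ q h1m
  have eA2 := Finset.add_sum_erase _ p h1m
  have heqA : ∑ j ∈ (Finset.Icc 1 ℓ).erase 1, q j
      = ∑ j ∈ (Finset.Icc 1 ℓ).erase 1, p j := by
    apply Finset.sum_congr rfl
    intro j hj
    simp only [Finset.mem_erase, Finset.mem_Icc] at hj
    exact hqo j hj.1 (by omega) (by omega)
  rw [heqA, hq1] at eA1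
  -- B sums
  have h2m : (2 * ℓ + 1 : ℕ) ∈ Finset.Icc (ℓ + 2) (2 * ℓ + 1) := by
    simp [Finset.mem_Icc]; omega
  have eB1 := Finset.add_sum_erase _ q h2m
  have eB2 := Finset.add_sum_erase _ p h2m
  have heqB : ∑ j ∈ (Finset.Icc (ℓ + 2) (2 * ℓ + 1)).erase (2 * ℓ + 1), q j
      = ∑ j ∈ (Finset.Icc (ℓ + 2) (2 * ℓ + 1)).erase (2 * ℓ + 1), p j := by
    apply Finset.sum_congr rfl
    intro j hj
    simp only [Finset.mem_erase, Finset.mem_Icc] at hj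
    exact hqo j (by omega) (by omega) hj.1
  rw [heqB, hqr] at eB1
  -- window sums
  have hw : ∀ i, 2 ≤ i → i ≤ ℓ + 1 →
      windowOdd ℓ q i = windowOdd ℓ p i - t ∧ t ≤ windowOdd ℓ p i := by
    intro i hi1 hi2
    have hm : ℓ + 1 ∈ Finset.Icc i (i + ℓ - 1) := by
      simp only [Finset.mem_Icc]; omega
    have e1 := Finset.add_sum_erase _ q hm
    have e2 := Finset.add_sum_erase _ p hm
    have heq : ∑ j ∈ (Finset.Icc i (i + ℓ - 1)).erase (ℓ + 1), q j
        = ∑ j ∈ (Finset.Icc i (i + ℓ - 1)).erase (ℓ + 1), p j := by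
      apply Finset.sum_congr rfl
      intro j hj
      simp only [Finset.mem_erase, Finset.mem_Icc] at hj
      exact hqo j (by omega) hj.1 (by omega)
    rw [heq, hqm] at e1
    unfold windowOdd
    omega
  -- sstar
  have hsp : sstarOdd ℓ p ∈ {x | ∃ i, 2 ≤ i ∧ i ≤ ℓ + 1 ∧ x = windowOdd ℓ p i} :=
    Nat.sInf_mem ⟨windowOdd ℓ p 2, 2, le_refl 2, by omega, rfl⟩
  have hsq : sstarOdd ℓ q ∈ {x | ∃ i, 2 ≤ i ∧ i ≤ ℓ + 1 ∧ x = windowOdd ℓ q i} :=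
    Nat.sInf_mem ⟨windowOdd ℓ q 2, 2, le_refl 2, by omega, rfl⟩
  obtain ⟨i0, hi01, hi02, hi03⟩ := hsp
  obtain ⟨i1, hi11, hi12, hi13⟩ := hsq
  have hle1 : sstarOdd ℓ q ≤ windowOdd ℓ q i0 :=
    Nat.sInf_le ⟨i0, hi01, hi02, rfl⟩
  have hle2 : sstarOdd ℓ p ≤ windowOdd ℓ p i1 :=
    Nat.sInf_le ⟨i1, hi11, hi12, rfl⟩
  have w0 := hw i0 hi01 hi02
  have w1 := hw i1 hi11 hi12
  have hss : sstarOdd ℓ q = sstarOdd ℓ p - t ∧ t ≤ sstarOdd ℓ p := by omega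
  unfold memSOdd
  omega
end

section
/- Let ℓ ≥ 2 and let i be an index with 2 ≤ i ≤ ℓ. Let z_i be the 0-1 vector of length 2ℓ with entries 1 exactly at positions 1, i, ℓ+i-1, and 2ℓ. For any position p of NN(2ℓ, ℓ) and any natural number t with t ≤ p_1, t ≤ p_i, t ≤ p_{ℓ+i-1}, and t ≤ p_{2ℓ}, the position p lies in S_ℓ if and only if p - t·z_i lies in S_ℓ. (Each vector z_i is invariant for S_ℓ.) -/
/-- Sum of `p j - t·(indicator of {a,b,c,d})` over a finset, for distinct
`a, b, c, d` with `t` at most each of the corresponding values. -/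
lemma sum_sub_ind (p : ℕ → ℕ) (t a b c d : ℕ)
    (hab : a ≠ b) (hac : a ≠ c) (had : a ≠ d) (hbc : b ≠ c) (hbd : b ≠ d) (hcd : c ≠ d)
    (ha : t ≤ p a) (hb : t ≤ p b) (hc : t ≤ p c) (hd : t ≤ p d)
    (s : Finset ℕ) :
    ∑ j ∈ s, (p j - t * (if j = a ∨ j = b ∨ j = c ∨ j = d then 1 else 0)) =
      ∑ j ∈ s, p j -
        t * ((if a ∈ s then 1 else 0) + (if b ∈ s then 1 else 0) +
             (if c ∈ s then 1 else 0) + (if d ∈ s then 1 else 0)) := by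
  rw [Finset.sum_tsub_distrib]
  · congr 1
    rw [← Finset.mul_sum]
    congr 1
    have hpt : ∀ j ∈ s, (if j = a ∨ j = b ∨ j = c ∨ j = d then (1:ℕ) else 0) =
        (if j = a then 1 else 0) + (if j = b then 1 else 0) +
        (if j = c then 1 else 0) + (if j = d then 1 else 0) := by
      intro j _
      split_ifs <;> omega
    rw [Finset.sum_congr rfl hpt]
    rw [Finset.sum_add_distrib, Finset.sum_add_distrib, Finset.sum_add_distrib,
      Finset.sum_ite_eq' s a (fun _ => 1), Finset.sum_ite_eq' s b (fun _ => 1),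
      Finset.sum_ite_eq' s c (fun _ => 1), Finset.sum_ite_eq' s d (fun _ => 1)]
  · intro j _
    split_ifs with h
    · rw [mul_one]
      rcases h with h | h | h | h <;> subst h <;> assumption
    · simp

/-- For ℓ ≥ 2 and 2 ≤ i ≤ ℓ, the 0-1 vector with ones exactly at
positions 1, i, ℓ+i-1, 2ℓ is invariant for `S_ℓ` in NN(2ℓ, ℓ): subtracting t
copies of it (componentwise, with t at most each affected stack) preserves
membership in `S_ℓ`. -/
theorem invariant_vector_even (ℓ : ℕ) (hℓ : 2 ≤ ℓ) (i : ℕ) (hi1 : 2 ≤ i) (hi2 : i ≤ ℓ)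
    (p : ℕ → ℕ) (t : ℕ)
    (h1 : t ≤ p 1) (h2 : t ≤ p i) (h3 : t ≤ p (ℓ + i - 1)) (h4 : t ≤ p (2 * ℓ)) :
    memS ℓ p ↔
      memS ℓ (fun j =>
        p j - t * (if j = 1 ∨ j = i ∨ j = ℓ + i - 1 ∨ j = 2 * ℓ then 1 else 0)) := by
  set q : ℕ → ℕ :=
    (fun j => p j - t * (if j = 1 ∨ j = i ∨ j = ℓ + i - 1 ∨ j = 2 * ℓ then 1 else 0))
    with hqdef
  have hab : (1:ℕ) ≠ i := by omega
  have hac : (1:ℕ) ≠ ℓ + i - 1 := by omega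
  have had : (1:ℕ) ≠ 2 * ℓ := by omega
  have hbc : i ≠ ℓ + i - 1 := by omega
  have hbd : i ≠ 2 * ℓ := by omega
  have hcd : ℓ + i - 1 ≠ 2 * ℓ := by omega
  have hsum : ∀ s : Finset ℕ, ∑ j ∈ s, q j =
      ∑ j ∈ s, p j -
        t * ((if 1 ∈ s then 1 else 0) + (if i ∈ s then 1 else 0) +
             (if ℓ + i - 1 ∈ s then 1 else 0) + (if 2 * ℓ ∈ s then 1 else 0)) := by
    intro s
    rw [hqdef]
    exact sum_sub_ind p t 1 i (ℓ + i - 1) (2 * ℓ) hab hac had hbc hbd hcd h1 h2 h3 h4 s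
  -- the two halves
  have hA : ∑ j ∈ Finset.Icc 1 ℓ, q j = (∑ j ∈ Finset.Icc 1 ℓ, p j) - 2 * t := by
    rw [hsum]
    have : ((if 1 ∈ Finset.Icc 1 ℓ then 1 else 0) + (if i ∈ Finset.Icc 1 ℓ then 1 else 0) +
        (if ℓ + i - 1 ∈ Finset.Icc 1 ℓ then 1 else 0) +
        (if 2 * ℓ ∈ Finset.Icc 1 ℓ then 1 else 0)) = 2 := by
      simp only [Finset.mem_Icc]
      split_ifs <;> omega
    rw [this]
    omega
  have hB : ∑ j ∈ Finset.Icc (ℓ + 1) (2 * ℓ), q j =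
      (∑ j ∈ Finset.Icc (ℓ + 1) (2 * ℓ), p j) - 2 * t := by
    rw [hsum]
    have : ((if 1 ∈ Finset.Icc (ℓ + 1) (2 * ℓ) then 1 else 0) +
        (if i ∈ Finset.Icc (ℓ + 1) (2 * ℓ) then 1 else 0) +
        (if ℓ + i - 1 ∈ Finset.Icc (ℓ + 1) (2 * ℓ) then 1 else 0) +
        (if 2 * ℓ ∈ Finset.Icc (ℓ + 1) (2 * ℓ) then 1 else 0)) = 2 := by
      simp only [Finset.mem_Icc]
      split_ifs <;> omega
    rw [this]
    omega
  -- lower bounds on the halves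
  have hlA : 2 * t ≤ ∑ j ∈ Finset.Icc 1 ℓ, p j := by
    have hsub : ({1, i} : Finset ℕ) ⊆ Finset.Icc 1 ℓ := by
      intro x hx
      simp only [Finset.mem_insert, Finset.mem_singleton] at hx
      simp only [Finset.mem_Icc]
      omega
    have := Finset.sum_le_sum_of_subset (f := p) hsub
    rw [Finset.sum_pair hab] at this
    omega
  have hlB : 2 * t ≤ ∑ j ∈ Finset.Icc (ℓ + 1) (2 * ℓ), p j := by
    have hsub : ({ℓ + i - 1, 2 * ℓ} : Finset ℕ) ⊆ Finset.Icc (ℓ + 1) (2 * ℓ) := by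
      intro x hx
      simp only [Finset.mem_insert, Finset.mem_singleton] at hx
      simp only [Finset.mem_Icc]
      omega
    have := Finset.sum_le_sum_of_subset (f := p) hsub
    rw [Finset.sum_pair hcd] at this
    omega
  -- windows
  have htw : ∀ k, 2 ≤ k → k ≤ ℓ + 1 → t ≤ window ℓ p k := by
    intro k hk1 hk2
    by_cases hki : k ≤ i
    · have hmem : i ∈ Finset.Icc k (k + ℓ - 2) := by
        simp only [Finset.mem_Icc]; omega
      have := Finset.single_le_sum (f := p) (fun j _ => Nat.zero_le _) hmem
      exact le_trans h2 this
    · have hmem : ℓ + i - 1 ∈ Finset.Icc k (k + ℓ - 2) := by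
        simp only [Finset.mem_Icc]; omega
      have := Finset.single_le_sum (f := p) (fun j _ => Nat.zero_le _) hmem
      exact le_trans h3 this
  have hwq : ∀ k, 2 ≤ k → k ≤ ℓ + 1 → window ℓ q k = window ℓ p k - t := by
    intro k hk1 hk2
    unfold window
    rw [hsum]
    have : ((if 1 ∈ Finset.Icc k (k + ℓ - 2) then 1 else 0) +
        (if i ∈ Finset.Icc k (k + ℓ - 2) then 1 else 0) +
        (if ℓ + i - 1 ∈ Finset.Icc k (k + ℓ - 2) then 1 else 0) +
        (if 2 * ℓ ∈ Finset.Icc k (k + ℓ - 2) then 1 else 0)) = 1 := by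
      simp only [Finset.mem_Icc]
      split_ifs <;> omega
    rw [this, mul_one]
  -- sstar
  have hnep : {x | ∃ k, 2 ≤ k ∧ k ≤ ℓ + 1 ∧ x = window ℓ p k}.Nonempty :=
    ⟨window ℓ p 2, 2, le_refl 2, by omega, rfl⟩
  have hneq : {x | ∃ k, 2 ≤ k ∧ k ≤ ℓ + 1 ∧ x = window ℓ q k}.Nonempty :=
    ⟨window ℓ q 2, 2, le_refl 2, by omega, rfl⟩
  obtain ⟨k0, hk01, hk02, hk03⟩ := Nat.sInf_mem hnep
  obtain ⟨k1, hk11, hk12, hk13⟩ := Nat.sInf_mem hneq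
  have hts : t ≤ sstar ℓ p := by
    rw [sstar, hk03]; exact htw k0 hk01 hk02
  have hsstar : sstar ℓ q = sstar ℓ p - t := by
    apply le_antisymm
    · have hmem : window ℓ p k0 - t ∈ {x | ∃ k, 2 ≤ k ∧ k ≤ ℓ + 1 ∧ x = window ℓ q k} :=
        ⟨k0, hk01, hk02, (hwq k0 hk01 hk02).symm⟩
      have := Nat.sInf_le hmem
      rw [sstar, sstar, hk03]
      exact this
    · have hle : sstar ℓ p ≤ window ℓ p k1 :=
        Nat.sInf_le ⟨k1, hk11, hk12, rfl⟩
      have e1 : sstar ℓ q = window ℓ p k1 - t := by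
        rw [sstar, hk13, hwq k1 hk11 hk12]
      rw [e1]
      omega
  have hq1 : q 1 = p 1 - t := by
    rw [hqdef]
    simp
  have hq2l : q (2 * ℓ) = p (2 * ℓ) - t := by
    rw [hqdef]
    simp
  simp only [memS, ← hqdef, hA, hB, hsstar, hq1, hq2l]
  constructor
  · rintro ⟨hse, hme⟩
    exact ⟨by omega, by omega⟩
  · rintro ⟨hse, hme⟩
    exact ⟨by omega, by omega⟩
end

section
/- (TwoDelta-Algorithm lemma.) Let ℓ ≥ 2 and let p = (a_1,...,a_ℓ,b_1,...,b_ℓ) be a position of NN(2ℓ, ℓ) with A > B and m < s*. Then there exists a position r = (r_1,...,r_{2ℓ}) and an index j with 2 ≤ j ≤ ℓ such that: r_i = p_i for all i with 1 ≤ i ≤ j-1 and for all i with ℓ+1 ≤ i ≤ 2ℓ; r_j ≤ p_j; r_i = 0 for all i with j < i ≤ ℓ; every window sum s_i(r) = r_i + r_{i+1} + ... + r_{i+ℓ-2} (i = 2,...,ℓ+1) satisfies s_i(r) ≥ m; and either the two halves of r have equal sums (r_1+...+r_ℓ = r_{ℓ+1}+...+r_{2ℓ}) or min_{i=2,...,ℓ+1}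 s_i(r) = m. -/
namespace TwoDeltaAux

/-- Prefix sums. -/
def S (p : ℕ → ℕ) (k : ℕ) : ℕ := ∑ i ∈ Finset.Icc 1 k, p i

lemma S_zero (p : ℕ → ℕ) : S p 0 = 0 := by simp [S]

lemma S_one (p : ℕ → ℕ) : S p 1 = p 1 := by simp [S]

lemma S_succ (p : ℕ → ℕ) (k : ℕ) : S p (k + 1) = S p k + p (k + 1) := by
  rw [S, S, Finset.sum_Icc_succ_top (by omega)]

lemma S_mono (p : ℕ → ℕ) {a b : ℕ} (h : a ≤ b) : S p a ≤ S p b :=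
  Finset.sum_le_sum_of_subset (Finset.Icc_subset_Icc le_rfl h)

/-- Truncation of `p` to total `c` on the `a`-side. -/
def trunc (ℓ : ℕ) (p : ℕ → ℕ) (c : ℕ) (i : ℕ) : ℕ :=
  if 1 ≤ i ∧ i ≤ ℓ then min (p i) (c - S p (i - 1)) else p i

lemma trunc_of_not {ℓ : ℕ} {p : ℕ → ℕ} {c i : ℕ} (h : ¬(1 ≤ i ∧ i ≤ ℓ)) :
    trunc ℓ p c i = p i := if_neg h

lemma sum_trunc (ℓ : ℕ) (p : ℕ → ℕ) (c : ℕ) {k : ℕ} (hk : k ≤ ℓ) :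
    ∑ i ∈ Finset.Icc 1 k, trunc ℓ p c i = min (S p k) c := by
  induction k with
  | zero => simp [S_zero]
  | succ n ih =>
    rw [Finset.sum_Icc_succ_top (by omega), ih (by omega), trunc,
      if_pos ⟨by omega, hk⟩]
    have h1 : (n + 1 : ℕ) - 1 = n := by omega
    rw [h1, S_succ]
    omega

lemma trunc_mono (ℓ : ℕ) (p : ℕ → ℕ) (c i : ℕ) :
    trunc ℓ p c i ≤ trunc ℓ p (c + 1) i := by
  unfold trunc; split <;> omega

lemma sum_trunc_succ_le (ℓ : ℕ) (p : ℕ → ℕ) (c : ℕ) (T : Finset ℕ) :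
    ∑ i ∈ T, trunc ℓ p (c + 1) i ≤ (∑ i ∈ T, trunc ℓ p c i) + 1 := by
  have hsplit : ∀ U : Finset ℕ,
      ∑ i ∈ U, trunc ℓ p (c + 1) i =
        (∑ i ∈ U, trunc ℓ p c i) + ∑ i ∈ U, (trunc ℓ p (c + 1) i - trunc ℓ p c i) := by
    intro U
    rw [← Finset.sum_add_distrib]
    refine Finset.sum_congr rfl fun i _ => ?_
    have := trunc_mono ℓ p c i
    omega
  have hd0 : ∀ i, ¬(1 ≤ i ∧ i ≤ ℓ) → trunc ℓ p (c + 1) i - trunc ℓ p c i = 0 := by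
    intro i hi
    simp only [trunc_of_not hi, Nat.sub_self]
  have h2 : ∑ i ∈ T, (trunc ℓ p (c + 1) i - trunc ℓ p c i) ≤
      ∑ i ∈ Finset.Icc 1 ℓ, (trunc ℓ p (c + 1) i - trunc ℓ p c i) := by
    have e : ∑ i ∈ T ∩ Finset.Icc 1 ℓ, (trunc ℓ p (c + 1) i - trunc ℓ p c i) =
        ∑ i ∈ T, (trunc ℓ p (c + 1) i - trunc ℓ p c i) := by
      refine Finset.sum_subset Finset.inter_subset_left fun x hx hnx => ?_
      refine hd0 x fun hmem => hnx (Finset.mem_inter.2 ⟨hx, ?_⟩)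
      exact Finset.mem_Icc.2 hmem
    rw [← e]
    exact Finset.sum_le_sum_of_subset Finset.inter_subset_right
  have h3 : ∑ i ∈ Finset.Icc 1 ℓ, (trunc ℓ p (c + 1) i - trunc ℓ p c i) ≤ 1 := by
    have := hsplit (Finset.Icc 1 ℓ)
    rw [sum_trunc ℓ p (c + 1) le_rfl, sum_trunc ℓ p c le_rfl] at this
    omega
  have := hsplit T
  omega

lemma window_trunc_mono (ℓ : ℕ) (p : ℕ → ℕ) (c i : ℕ) :
    window ℓ (trunc ℓ p c) i ≤ window ℓ (trunc ℓ p (c + 1)) i :=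
  Finset.sum_le_sum fun k _ => trunc_mono ℓ p c k

lemma window_trunc_lip (ℓ : ℕ) (p : ℕ → ℕ) (c i : ℕ) :
    window ℓ (trunc ℓ p (c + 1)) i ≤ window ℓ (trunc ℓ p c) i + 1 :=
  sum_trunc_succ_le ℓ p c _

lemma sstar_le (ℓ : ℕ) (q : ℕ → ℕ) {i : ℕ} (h1 : 2 ≤ i) (h2 : i ≤ ℓ + 1) :
    sstar ℓ q ≤ window ℓ q i :=
  Nat.sInf_le ⟨i, h1, h2, rfl⟩

lemma sstar_exists (ℓ : ℕ) (hℓ : 1 ≤ ℓ) (q : ℕ → ℕ) :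
    ∃ i, 2 ≤ i ∧ i ≤ ℓ + 1 ∧ sstar ℓ q = window ℓ q i :=
  Nat.sInf_mem (⟨window ℓ q 2, 2, le_rfl, by omega, rfl⟩ :
    Set.Nonempty {x | ∃ i, 2 ≤ i ∧ i ≤ ℓ + 1 ∧ x = window ℓ q i})

lemma M_mono (ℓ : ℕ) (hℓ : 1 ≤ ℓ) (p : ℕ → ℕ) (c : ℕ) :
    sstar ℓ (trunc ℓ p c) ≤ sstar ℓ (trunc ℓ p (c + 1)) := by
  obtain ⟨i, h1, h2, he⟩ := sstar_exists ℓ hℓ (trunc ℓ p (c + 1))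
  calc sstar ℓ (trunc ℓ p c) ≤ window ℓ (trunc ℓ p c) i := sstar_le ℓ _ h1 h2
    _ ≤ window ℓ (trunc ℓ p (c + 1)) i := window_trunc_mono ℓ p c i
    _ = _ := he.symm

lemma M_lip (ℓ : ℕ) (hℓ : 1 ≤ ℓ) (p : ℕ → ℕ) (c : ℕ) :
    sstar ℓ (trunc ℓ p (c + 1)) ≤ sstar ℓ (trunc ℓ p c) + 1 := by
  obtain ⟨i, h1, h2, he⟩ := sstar_exists ℓ hℓ (trunc ℓ p c)
  calc sstar ℓ (trunc ℓ p (c + 1)) ≤ window ℓ (trunc ℓ p (c + 1)) i := sstar_le ℓ _ h1 h2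
    _ ≤ window ℓ (trunc ℓ p c) i + 1 := window_trunc_lip ℓ p c i
    _ = _ := by rw [he]

lemma trunc_top (ℓ : ℕ) (p : ℕ → ℕ) : trunc ℓ p (S p ℓ) = p := by
  funext i
  unfold trunc
  split
  · next h =>
    obtain ⟨k, rfl⟩ : ∃ k, i = k + 1 := ⟨i - 1, by omega⟩
    have h1 : (k + 1 : ℕ) - 1 = k := by omega
    rw [h1]
    have h2 : S p (k + 1) = S p k + p (k + 1) := S_succ p k
    have h3 : S p (k + 1) ≤ S p ℓ := S_mono p h.2
    omega
  · rfl

lemma window_two (ℓ : ℕ) (p : ℕ → ℕ) (hℓ : 2 ≤ ℓ) (c : ℕ) :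
    window ℓ (trunc ℓ p c) 2 = min (S p ℓ) c - min (p 1) c := by
  have hIcc : (2 : ℕ) + ℓ - 2 = ℓ := by omega
  have h1 : Finset.Icc 1 ℓ = insert 1 (Finset.Icc 2 ℓ) := by
    ext x; simp only [Finset.mem_Icc, Finset.mem_insert]; omega
  have h2 : (1 : ℕ) ∉ Finset.Icc 2 ℓ := by simp
  have h3 := sum_trunc ℓ p c (le_refl ℓ)
  rw [h1, Finset.sum_insert h2] at h3
  have h4 : trunc ℓ p c 1 = min (p 1) c := by
    unfold trunc
    rw [if_pos ⟨le_rfl, by omega⟩]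
    simp [S_zero]
  rw [window, hIcc]
  omega

end TwoDeltaAux

/-- TwoDelta-Algorithm lemma: For ℓ ≥ 2 and a position p of
NN(2ℓ, ℓ) with A > B and m < s*, there is a position r agreeing with p on
positions 1,...,j-1 and on the whole B-side, with r j ≤ p j, zeros at positions
j+1,...,ℓ, all window sums at least m, and either equal half-sums or
minimum window sum exactly m. -/
theorem twoDelta_algorithm (ℓ : ℕ) (hℓ : 2 ≤ ℓ) (p : ℕ → ℕ)
    (hAB : (∑ i ∈ Finset.Icc (ℓ + 1) (2 * ℓ), p i) < (∑ i ∈ Finset.Icc 1 ℓ, p i))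
    (hms : min (p 1) (p (2 * ℓ)) < sstar ℓ p) :
    ∃ r : ℕ → ℕ, ∃ j : ℕ, 2 ≤ j ∧ j ≤ ℓ ∧
      (∀ i, 1 ≤ i → i ≤ j - 1 → r i = p i) ∧
      (∀ i, ℓ + 1 ≤ i → i ≤ 2 * ℓ → r i = p i) ∧
      r j ≤ p j ∧
      (∀ i, j < i → i ≤ ℓ → r i = 0) ∧
      (∀ i, 2 ≤ i → i ≤ ℓ + 1 → min (p 1) (p (2 * ℓ)) ≤ window ℓ r i) ∧
      ((∑ i ∈ Finset.Icc 1 ℓ, r i) = (∑ i ∈ Finset.Icc (ℓ + 1) (2 * ℓ), r i) ∨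
        sstar ℓ r = min (p 1) (p (2 * ℓ))) := by
  classical
  open TwoDeltaAux in
  set m := min (p 1) (p (2 * ℓ)) with hm
  set A := ∑ i ∈ Finset.Icc 1 ℓ, p i with hA
  set B := ∑ i ∈ Finset.Icc (ℓ + 1) (2 * ℓ), p i with hB
  have hSA : TwoDeltaAux.S p ℓ = A := rfl
  set M : ℕ → ℕ := fun c => sstar ℓ (TwoDeltaAux.trunc ℓ p c) with hM
  have hMA : M A = sstar ℓ p := by
    rw [hM]; dsimp only; rw [← hSA, TwoDeltaAux.trunc_top]
  -- obtain a good cutoff c with the desired properties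
  obtain ⟨c, hp1c, hcA, hwin, hdisj⟩ :
      ∃ c, p 1 ≤ c ∧ c ≤ A ∧ m ≤ M c ∧ (c = B ∨ M c = m) := by
    by_cases hcase : m < M B
    · refine ⟨B, ?_, le_of_lt hAB, le_of_lt hcase, Or.inl rfl⟩
      by_contra hc
      push_neg at hc
      have h2 : M B ≤ window ℓ (TwoDeltaAux.trunc ℓ p B) 2 :=
        TwoDeltaAux.sstar_le ℓ _ le_rfl (by omega)
      rw [TwoDeltaAux.window_two ℓ p hℓ B, hSA] at h2
      omega
    · push_neg at hcase
      set c := Nat.findGreatest (fun c => M c ≤ m) A with hc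
      have hcB : B ≤ c := Nat.le_findGreatest (P := fun c => M c ≤ m) (le_of_lt hAB) hcase
      have hcle : c ≤ A := Nat.findGreatest_le A
      have hPc : M c ≤ m := Nat.findGreatest_spec (P := fun c => M c ≤ m) (le_of_lt hAB) hcase
      have hcA' : c < A := by
        rcases lt_or_eq_of_le hcle with h | h
        · exact h
        · exfalso; rw [h, hMA] at hPc; omega
      have hnext : ¬ (M (c + 1) ≤ m) :=
        Nat.findGreatest_is_greatest (P := fun c => M c ≤ m) (n := A) (by omega) (by omega)
      have hlip : M (c + 1) ≤ M c + 1 := TwoDeltaAux.M_lip ℓ (by omega) p c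
      have hMc : M c = m := by omega
      refine ⟨c, ?_, hcle, le_of_eq hMc.symm, Or.inr hMc⟩
      by_contra hp1
      push_neg at hp1
      have h2 : M (c + 1) ≤ window ℓ (TwoDeltaAux.trunc ℓ p (c + 1)) 2 :=
        TwoDeltaAux.sstar_le ℓ _ le_rfl (by omega)
      rw [TwoDeltaAux.window_two ℓ p hℓ (c + 1), hSA] at h2
      have : min A (c + 1) = c + 1 := by omega
      omega
  -- build the cut index j
  have hex : ∃ n, 2 ≤ n ∧ c ≤ TwoDeltaAux.S p n := ⟨ℓ, hℓ, by rw [hSA]; exact hcA⟩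
  set j := Nat.find hex with hj
  have hj2 : 2 ≤ j := (Nat.find_spec hex).1
  have hjS : c ≤ TwoDeltaAux.S p j := (Nat.find_spec hex).2
  have hjl : j ≤ ℓ := Nat.find_min' hex ⟨hℓ, by rw [hSA]; exact hcA⟩
  have hjlt : ∀ i, 2 ≤ i → i < j → TwoDeltaAux.S p i < c := by
    intro i h2i hij
    have := Nat.find_min hex hij
    push_neg at this
    exact this h2i
  refine ⟨TwoDeltaAux.trunc ℓ p c, j, hj2, hjl, ?_, ?_, ?_, ?_, ?_, ?_⟩
  · -- agrees below j
    intro i h1i hij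
    have hSle : TwoDeltaAux.S p i ≤ c := by
      rcases Nat.lt_or_ge i 2 with h | h
      · have hi1 : i = 1 := by omega
        subst hi1
        rw [TwoDeltaAux.S_one]
        exact hp1c
      · exact le_of_lt (hjlt i h (by omega))
    obtain ⟨k, rfl⟩ : ∃ k, i = k + 1 := ⟨i - 1, by omega⟩
    have hSk : TwoDeltaAux.S p (k + 1) = TwoDeltaAux.S p k + p (k + 1) :=
      TwoDeltaAux.S_succ p k
    unfold TwoDeltaAux.trunc
    rw [if_pos ⟨by omega, by omega⟩]
    have h1 : (k + 1 : ℕ) - 1 = k := by omega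
    rw [h1]
    omega
  · -- agrees on the b-side
    intro i hi _
    exact TwoDeltaAux.trunc_of_not (by omega)
  · -- r j ≤ p j
    unfold TwoDeltaAux.trunc
    rw [if_pos ⟨by omega, hjl⟩]
    exact min_le_left _ _
  · -- zeros above j
    intro i hji hil
    have hS : c ≤ TwoDeltaAux.S p (i - 1) :=
      le_trans hjS (TwoDeltaAux.S_mono p (by omega))
    unfold TwoDeltaAux.trunc
    rw [if_pos ⟨by omega, hil⟩]
    omega
  · -- all windows at least m
    intro i h2i hil
    exact le_trans hwin (TwoDeltaAux.sstar_le ℓ _ h2i hil)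
  · -- the disjunction
    rcases hdisj with h | h
    · left
      have h1 : ∑ i ∈ Finset.Icc 1 ℓ, TwoDeltaAux.trunc ℓ p c i = min (TwoDeltaAux.S p ℓ) c :=
        TwoDeltaAux.sum_trunc ℓ p c le_rfl
      have h2 : ∑ i ∈ Finset.Icc (ℓ + 1) (2 * ℓ), TwoDeltaAux.trunc ℓ p c i = B := by
        refine Finset.sum_congr rfl fun i hi => ?_
        rw [Finset.mem_Icc] at hi
        exact TwoDeltaAux.trunc_of_not (by omega)
      rw [h1, h2, hSA]
      omega
    · right
      exact h
end

section
/- (Δ-Algorithm lemma.) Let ℓ ≥ 2 and let p = (a_1,...,a_ℓ,b_1,...,b_ℓ) be a position of NN(2ℓ, ℓ) with s* = m and A > B. Then there exists a position p' with: p'_i ≤ p_i for all i, p' ≠ p, p'_i = p_i for all i with ℓ+1 ≤ i ≤ 2ℓ (so that p' is reachable from p by a legal A-side move on the move set {1,...,ℓ}), and p' lies in S_ℓ. -/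
lemma Icc_sum_split (a b c : ℕ) (h1 : a ≤ b + 1) (h2 : b ≤ c) (f : ℕ → ℕ) :
    ∑ j ∈ Finset.Icc a c, f j
      = ∑ j ∈ Finset.Icc a b, f j + ∑ j ∈ Finset.Icc (b + 1) c, f j := by
  rw [← Finset.sum_union]
  · congr 1
    ext x
    simp only [Finset.mem_union, Finset.mem_Icc]
    omega
  · rw [Finset.disjoint_left]
    intro x hx hy
    simp only [Finset.mem_Icc] at hx hy
    omega

/-- Δ-Algorithm lemma: For ℓ ≥ 2 and a position p of NN(2ℓ, ℓ)
with s* = m and A > B, there is a position p' with p' ≤ p componentwise,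
p' ≠ p, p' agreeing with p on the B-side (so p' is reachable by a legal
A-side move on the move set {1,...,ℓ}), and p' ∈ S_ℓ. -/
theorem delta_algorithm (ℓ : ℕ) (hℓ : 2 ≤ ℓ) (p : ℕ → ℕ)
    (hs : sstar ℓ p = min (p 1) (p (2 * ℓ)))
    (hAB : (∑ i ∈ Finset.Icc (ℓ + 1) (2 * ℓ), p i) < (∑ i ∈ Finset.Icc 1 ℓ, p i)) :
    ∃ p' : ℕ → ℕ,
      (∀ i ∈ Finset.Icc 1 (2 * ℓ), p' i ≤ p i) ∧
      (∃ i ∈ Finset.Icc 1 (2 * ℓ), p' i ≠ p i) ∧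
      (∀ i ∈ Finset.Icc (ℓ + 1) (2 * ℓ), p' i = p i) ∧
      memS ℓ p' := by
  set B := ∑ i ∈ Finset.Icc (ℓ + 1) (2 * ℓ), p i with hB
  set A := ∑ i ∈ Finset.Icc 1 ℓ, p i with hA
  set m := min (p 1) (p (2 * ℓ)) with hm
  set c := max (B - p 1) m with hc
  set S : ℕ → ℕ := fun i => ∑ j ∈ Finset.Icc i ℓ, p j with hS
  set T : ℕ → ℕ := fun i => min (S i) c with hT
  set p' : ℕ → ℕ :=
    fun i => if i = 1 then B - c else if i ≤ ℓ then T i - T (i + 1) else p i with hp'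
  -- T is antitone (one step)
  have hT_le : ∀ i, T (i + 1) ≤ T i := by
    intro i
    have h1 : S (i + 1) ≤ S i := by
      simp only [hS]
      exact Finset.sum_le_sum_of_subset (Finset.Icc_subset_Icc (by omega) le_rfl)
    simp only [hT]
    omega
  -- telescoping sums of p'
  have htel : ∀ k i, 2 ≤ i → i + k = ℓ + 1 → ∑ j ∈ Finset.Icc i ℓ, p' j = T i := by
    intro k
    induction k with
    | zero =>
      intro i h2 hik
      have hi : i = ℓ + 1 := by omega
      subst hi
      rw [Finset.Icc_eq_empty (by omega), Finset.sum_empty]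
      simp only [hT, hS]
      rw [Finset.Icc_eq_empty (by omega), Finset.sum_empty]
      omega
    | succ k ih =>
      intro i h2 hik
      rw [Icc_sum_split i i ℓ (by omega) (by omega), Finset.Icc_self,
        Finset.sum_singleton, ih (i + 1) (by omega) (by omega)]
      have hpi : p' i = T i - T (i + 1) := by
        simp only [hp']
        rw [if_neg (by omega), if_pos (by omega)]
      have := hT_le i
      omega
  -- window of p for 2 ≤ i ≤ ℓ
  have hwp : ∀ i, 2 ≤ i → i ≤ ℓ →
      window ℓ p i = S i + ∑ j ∈ Finset.Icc (ℓ + 1) (i + ℓ - 2), p j := by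
    intro i h2 h3
    simp only [window, hS]
    exact Icc_sum_split i ℓ (i + ℓ - 2) (by omega) (by omega) p
  -- window of p' for 2 ≤ i ≤ ℓ
  have hwp' : ∀ i, 2 ≤ i → i ≤ ℓ →
      window ℓ p' i = T i + ∑ j ∈ Finset.Icc (ℓ + 1) (i + ℓ - 2), p j := by
    intro i h2 h3
    simp only [window]
    rw [Icc_sum_split i ℓ (i + ℓ - 2) (by omega) (by omega),
      htel (ℓ + 1 - i) i h2 (by omega)]
    congr 1
    refine Finset.sum_congr rfl fun j hj => ?_
    simp only [Finset.mem_Icc] at hj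
    simp only [hp']
    rw [if_neg (by omega), if_neg (by omega)]
  -- window of p' at ℓ+1 agrees with p
  have hwl1 : window ℓ p' (ℓ + 1) = window ℓ p (ℓ + 1) := by
    simp only [window]
    refine Finset.sum_congr rfl fun j hj => ?_
    simp only [Finset.mem_Icc] at hj
    simp only [hp']
    rw [if_neg (by omega), if_neg (by omega)]
  -- lower bound from hypothesis
  have hwin_lb : ∀ i, 2 ≤ i → i ≤ ℓ + 1 → m ≤ window ℓ p i := by
    intro i h2 h3
    have hmem : window ℓ p i ∈ {x | ∃ i', 2 ≤ i' ∧ i' ≤ ℓ + 1 ∧ x = window ℓ p i'} :=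
      ⟨i, h2, h3, rfl⟩
    have h4 : sstar ℓ p ≤ window ℓ p i := Nat.sInf_le hmem
    omega
  -- the minimum is attained
  have hwit : ∃ i0, 2 ≤ i0 ∧ i0 ≤ ℓ + 1 ∧ m = window ℓ p i0 := by
    have hne : {x | ∃ i, 2 ≤ i ∧ i ≤ ℓ + 1 ∧ x = window ℓ p i}.Nonempty :=
      ⟨window ℓ p 2, ⟨2, le_rfl, by omega, rfl⟩⟩
    have h1 : sstar ℓ p ∈ {x | ∃ i, 2 ≤ i ∧ i ≤ ℓ + 1 ∧ x = window ℓ p i} :=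
      Nat.sInf_mem hne
    rw [hs] at h1
    exact h1
  -- B-side sum split: window at ℓ+1 plus last entry
  have hW : window ℓ p (ℓ + 1) + p (2 * ℓ) = B := by
    simp only [window]
    have hidx : ℓ + 1 + ℓ - 2 = 2 * ℓ - 1 := by omega
    rw [hidx, hB, Icc_sum_split (ℓ + 1) (2 * ℓ - 1) (2 * ℓ) (by omega) (by omega) p,
      show 2 * ℓ - 1 + 1 = 2 * ℓ by omega, Finset.Icc_self, Finset.sum_singleton]
  have hmW : m ≤ window ℓ p (ℓ + 1) := hwin_lb (ℓ + 1) (by omega) le_rfl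
  -- A-side split
  have hA1 : A = p 1 + S 2 := by
    rw [hA]
    simp only [hS]
    rw [Icc_sum_split 1 1 ℓ (by omega) (by omega) p, Finset.Icc_self, Finset.sum_singleton]
  -- m ≤ S 2
  have hmS2 : m ≤ S 2 := by
    have h1 := hwin_lb 2 le_rfl (by omega)
    have h2 := hwp 2 le_rfl hℓ
    rw [Finset.Icc_eq_empty (by omega : ¬ ℓ + 1 ≤ 2 + ℓ - 2), Finset.sum_empty] at h2
    omega
  have hcS2 : c ≤ S 2 := by omega
  have hcB : c ≤ B := by omega
  -- the sum equation for p'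
  have hSE : ∑ j ∈ Finset.Icc 1 ℓ, p' j = B := by
    rw [Icc_sum_split 1 1 ℓ (by omega) (by omega), Finset.Icc_self, Finset.sum_singleton,
      show (1 : ℕ) + 1 = 2 by rfl, htel (ℓ - 1) 2 le_rfl (by omega)]
    have hp1 : p' 1 = B - c := by simp [hp']
    have hT2 : T 2 = c := by simp only [hT]; omega
    rw [hp1, hT2]
    omega
  refine ⟨p', ?_, ?_, ?_, ?_, ?_⟩
  · -- p' ≤ p componentwise
    intro i hi
    simp only [Finset.mem_Icc] at hi
    by_cases h1 : i = 1
    · subst h1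
      have hv : p' 1 = B - c := by simp [hp']
      omega
    · by_cases h2 : i ≤ ℓ
      · have hpi : p' i = T i - T (i + 1) := by
          simp only [hp']
          rw [if_neg h1, if_pos h2]
        have hSi : S i = p i + S (i + 1) := by
          simp only [hS]
          rw [Icc_sum_split i i ℓ (by omega) (by omega), Finset.Icc_self,
            Finset.sum_singleton]
        have hTi : T i = min (S i) c := by simp only [hT]
        have hTi1 : T (i + 1) = min (S (i + 1)) c := by simp only [hT]
        omega
      · simp only [hp']
        rw [if_neg h1, if_neg h2]
  · -- p' ≠ p somewhere
    by_contra hcon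
    push_neg at hcon
    have hsum : ∑ j ∈ Finset.Icc 1 ℓ, p' j = A := by
      rw [hA]
      exact Finset.sum_congr rfl fun i hi => by
        refine hcon i ?_
        simp only [Finset.mem_Icc] at hi ⊢
        omega
    omega
  · -- agrees on B-side
    intro i hi
    simp only [Finset.mem_Icc] at hi
    simp only [hp']
    rw [if_neg (by omega), if_neg (by omega)]
  · -- SE
    have hBs : ∑ i ∈ Finset.Icc (ℓ + 1) (2 * ℓ), p' i = B := by
      rw [hB]
      exact Finset.sum_congr rfl fun i hi => by
        simp only [Finset.mem_Icc] at hi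
        simp only [hp']
        rw [if_neg (by omega), if_neg (by omega)]
    rw [hSE, hBs]
  · -- ME
    have hp'1 : p' 1 = B - c := by simp [hp']
    have hp'2l : p' (2 * ℓ) = p (2 * ℓ) := by
      simp only [hp']
      rw [if_neg (by omega), if_neg (by omega)]
    have hminx : min (B - c) (p (2 * ℓ)) = m := by omega
    rw [hp'1, hp'2l, hminx]
    obtain ⟨i0, hi02, hi0l, hi0v⟩ := hwit
    have hlb : ∀ y ∈ {x | ∃ i, 2 ≤ i ∧ i ≤ ℓ + 1 ∧ x = window ℓ p' i}, m ≤ y := by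
      rintro y ⟨i, h2, h3, rfl⟩
      by_cases hil : i ≤ ℓ
      · have e1 := hwp' i h2 hil
        have e2 := hwp i h2 hil
        have e3 := hwin_lb i h2 (by omega)
        have hTi : T i = min (S i) c := by simp only [hT]
        omega
      · have hieq : i = ℓ + 1 := by omega
        subst hieq
        rw [hwl1]
        exact hwin_lb _ (by omega) le_rfl
    have hub : window ℓ p' i0 ≤ m := by
      by_cases hil : i0 ≤ ℓ
      · have e1 := hwp' i0 hi02 hil
        have e2 := hwp i0 hi02 hil
        have hTi : T i0 = min (S i0) c := by simp only [hT]
        omega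
      · have hieq : i0 = ℓ + 1 := by omega
        subst hieq
        rw [hwl1, ← hi0v]
    have heq : window ℓ p' i0 = m := le_antisymm hub (hlb _ ⟨i0, hi02, hi0l, rfl⟩)
    have hmem' : m ∈ {x | ∃ i, 2 ≤ i ∧ i ≤ ℓ + 1 ∧ x = window ℓ p' i} :=
      ⟨i0, hi02, hi0l, heq.symm⟩
    have hle1 : sstar ℓ p' ≤ m := Nat.sInf_le hmem'
    have hle2 : m ≤ sstar ℓ p' := le_csInf ⟨m, hmem'⟩ hlb
    omega
end

section
/- (δ-Algorithm lemma.) Let ℓ ≥ 2 and let p = (a_1,...,a_ℓ,b_1,...,b_ℓ) be a position of NN(2ℓ, ℓ) with A = B and 0 < m < s*. Then there exists a position r with: r_i ≤ p_i for all i; r_1 = p_1 and r_{2ℓ} = p_{2ℓ}; the total reduction on the first half equals the total reduction on the second half, i.e. (p_1 - r_1) + ... + (p_ℓ - r_ℓ) = (p_{ℓ+1} - r_{ℓ+1}) + ... + (p_{2ℓ} - r_{2ℓ}); every window sum s_i(r) = r_i + ... + r_{i+ℓ-2} (i = 2,...,ℓ+1) satisfies s_i(r) ≥ m; and min_{i=2,...,ℓ+1}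 s_i(r) ≤ m + 1. -/
lemma sstar_set_nonempty (ℓ : ℕ) (hℓ : 2 ≤ ℓ) (p : ℕ → ℕ) :
    {x | ∃ i, 2 ≤ i ∧ i ≤ ℓ + 1 ∧ x = window ℓ p i}.Nonempty :=
  ⟨window ℓ p 2, 2, le_refl 2, by omega, rfl⟩

lemma sstar_le_window (ℓ : ℕ) (p : ℕ → ℕ) {i : ℕ} (h2 : 2 ≤ i) (h3 : i ≤ ℓ + 1) :
    sstar ℓ p ≤ window ℓ p i :=
  Nat.sInf_le ⟨i, h2, h3, rfl⟩

lemma sstar_eq_some_window (ℓ : ℕ) (hℓ : 2 ≤ ℓ) (p : ℕ → ℕ) :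
    ∃ i, 2 ≤ i ∧ i ≤ ℓ + 1 ∧ sstar ℓ p = window ℓ p i :=
  Nat.sInf_mem (sstar_set_nonempty ℓ hℓ p)

/-- One step: each window loses at most 2 when we decrement at `j` and `k`. -/
lemma window_step_le (ℓ : ℕ) (p : ℕ → ℕ) (j k : ℕ) (hj : 1 ≤ p j) (hk : 1 ≤ p k)
    (i : ℕ) :
    window ℓ p i ≤ window ℓ (fun x => if x = j ∨ x = k then p x - 1 else p x) i + 2 := by
  unfold window
  set s := Finset.Icc i (i + ℓ - 2) with hs
  have h1 : ∀ x ∈ s, p x ≤ (fun x => if x = j ∨ x = k then p x - 1 else p x) x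
      + ((if x = j then 1 else 0) + (if x = k then 1 else 0)) := by
    intro x _
    by_cases hxj : x = j <;> by_cases hxk : x = k <;> simp [hxj, hxk] <;> omega
  calc ∑ x ∈ s, p x
      ≤ ∑ x ∈ s, ((fun x => if x = j ∨ x = k then p x - 1 else p x) x
        + ((if x = j then 1 else 0) + (if x = k then 1 else 0))) :=
        Finset.sum_le_sum h1
    _ = (∑ x ∈ s, (fun x => if x = j ∨ x = k then p x - 1 else p x) x)
        + ((∑ x ∈ s, (if x = j then 1 else 0)) + (∑ x ∈ s, (if x = k then 1 else 0))) := by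
        rw [Finset.sum_add_distrib, Finset.sum_add_distrib]
    _ ≤ _ := by
        have hj1 : (∑ x ∈ s, (if x = j then (1:ℕ) else 0)) ≤ 1 := by
          rw [Finset.sum_ite_eq' s j (fun _ => (1:ℕ))]
          split <;> omega
        have hk1 : (∑ x ∈ s, (if x = k then (1:ℕ) else 0)) ≤ 1 := by
          rw [Finset.sum_ite_eq' s k (fun _ => (1:ℕ))]
          split <;> omega
        omega

/-- Core of the δ-algorithm, by induction on the interior sum. -/
lemma delta_aux (ℓ m : ℕ) (hℓ : 2 ≤ ℓ) :
    ∀ N : ℕ, ∀ p : ℕ → ℕ, (∑ i ∈ Finset.Icc 2 (2 * ℓ - 1), p i) ≤ N →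
      m ≤ sstar ℓ p →
      ∃ r : ℕ → ℕ, (∀ i, r i ≤ p i) ∧
        (∀ i, i < 2 ∨ 2 * ℓ - 1 < i → r i = p i) ∧
        (∑ i ∈ Finset.Icc 2 ℓ, (p i - r i)) = (∑ i ∈ Finset.Icc (ℓ + 1) (2 * ℓ - 1), (p i - r i)) ∧
        m ≤ sstar ℓ r ∧ sstar ℓ r ≤ m + 1 := by
  intro N
  induction N with
  | zero =>
    intro p hsum hm
    refine ⟨p, fun _ => le_refl _, fun _ _ => rfl, by simp, hm, ?_⟩
    have hsub : Finset.Icc 2 ℓ ⊆ Finset.Icc 2 (2 * ℓ - 1) := by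
      apply Finset.Icc_subset_Icc (le_refl _); omega
    have hw2 : window ℓ p 2 = ∑ i ∈ Finset.Icc 2 ℓ, p i := by
      unfold window; congr 1; congr 1; omega
    have : window ℓ p 2 ≤ 0 := by
      rw [hw2]
      calc ∑ i ∈ Finset.Icc 2 ℓ, p i ≤ ∑ i ∈ Finset.Icc 2 (2 * ℓ - 1), p i :=
            Finset.sum_le_sum_of_subset hsub
        _ ≤ 0 := hsum
    have := sstar_le_window ℓ p (le_refl 2) (by omega)
    omega
  | succ N ih =>
    intro p hsum hm
    by_cases hdone : sstar ℓ p ≤ m + 1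
    · exact ⟨p, fun _ => le_refl _, fun _ _ => rfl, by simp, hm, hdone⟩
    push_neg at hdone
    have hbig : m + 2 ≤ sstar ℓ p := hdone
    -- windows 2 and ℓ+1 are positive, pick positive stacks in each half
    have hw2 : window ℓ p 2 = ∑ i ∈ Finset.Icc 2 ℓ, p i := by
      unfold window; congr 1; congr 1; omega
    have hwl : window ℓ p (ℓ + 1) = ∑ i ∈ Finset.Icc (ℓ + 1) (2 * ℓ - 1), p i := by
      unfold window; congr 1; congr 1; omega
    have h2pos : 0 < ∑ i ∈ Finset.Icc 2 ℓ, p i := by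
      have := sstar_le_window ℓ p (le_refl 2) (show 2 ≤ ℓ + 1 by omega)
      omega
    have hlpos : 0 < ∑ i ∈ Finset.Icc (ℓ + 1) (2 * ℓ - 1), p i := by
      have := sstar_le_window ℓ p (show 2 ≤ ℓ + 1 by omega) (le_refl (ℓ + 1))
      omega
    obtain ⟨j, hjmem, hjpos⟩ : ∃ j ∈ Finset.Icc 2 ℓ, 0 < p j := by
      by_contra h
      push_neg at h
      have : ∑ i ∈ Finset.Icc 2 ℓ, p i = 0 :=
        Finset.sum_eq_zero (fun i hi => by have := h i hi; omega)
      omega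
    obtain ⟨k, hkmem, hkpos⟩ : ∃ k ∈ Finset.Icc (ℓ + 1) (2 * ℓ - 1), 0 < p k := by
      by_contra h
      push_neg at h
      have : ∑ i ∈ Finset.Icc (ℓ + 1) (2 * ℓ - 1), p i = 0 :=
        Finset.sum_eq_zero (fun i hi => by have := h i hi; omega)
      omega
    simp only [Finset.mem_Icc] at hjmem hkmem
    set q : ℕ → ℕ := fun x => if x = j ∨ x = k then p x - 1 else p x with hq
    have hq_le : ∀ i, q i ≤ p i := by
      intro i; simp only [hq]; split <;> omega
    have hqj : q j = p j - 1 := by simp [hq]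
    have hqk : q k = p k - 1 := by simp [hq]
    have hjk : j ≠ k := by omega
    have hq_eq : ∀ i, i ≠ j → i ≠ k → q i = p i := by
      intro i h1 h2; simp [hq, h1, h2]
    -- windows of q lose at most 2
    have hwin : ∀ i, window ℓ p i ≤ window ℓ q i + 2 :=
      window_step_le ℓ p j k (by omega) (by omega)
    have hmq : m ≤ sstar ℓ q := by
      obtain ⟨i, hi2, hi3, heq⟩ := sstar_eq_some_window ℓ hℓ q
      have h1 := sstar_le_window ℓ p hi2 hi3
      have h2 := hwin i
      omega
    -- the interior sum strictly decreases
    have hqsum : ∑ i ∈ Finset.Icc 2 (2 * ℓ - 1), q i ≤ N := by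
      have hlt : ∑ i ∈ Finset.Icc 2 (2 * ℓ - 1), q i < ∑ i ∈ Finset.Icc 2 (2 * ℓ - 1), p i := by
        apply Finset.sum_lt_sum (fun i _ => hq_le i)
        refine ⟨j, ?_, ?_⟩
        · simp only [Finset.mem_Icc]; omega
        · rw [hqj]; omega
      omega
    obtain ⟨r, hr_le, hr_eq, hr_sum, hr_m, hr_m1⟩ := ih q hqsum hmq
    refine ⟨r, fun i => le_trans (hr_le i) (hq_le i), ?_, ?_, hr_m, hr_m1⟩
    · intro i hi
      rw [hr_eq i hi]
      apply hq_eq <;> omega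
    · -- reduction sums
      have key : ∀ (s : Finset ℕ), (∀ i ∈ s, p i - r i = (p i - q i) + (q i - r i)) := by
        intro s i _
        have h1 := hq_le i
        have h2 := hr_le i
        omega
      have hleft : ∑ i ∈ Finset.Icc 2 ℓ, (p i - r i)
          = (∑ i ∈ Finset.Icc 2 ℓ, (p i - q i)) + ∑ i ∈ Finset.Icc 2 ℓ, (q i - r i) := by
        rw [← Finset.sum_add_distrib]
        exact Finset.sum_congr rfl (key _)
      have hright : ∑ i ∈ Finset.Icc (ℓ + 1) (2 * ℓ - 1), (p i - r i)
          = (∑ i ∈ Finset.Icc (ℓ + 1) (2 * ℓ - 1), (p i - q i))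
            + ∑ i ∈ Finset.Icc (ℓ + 1) (2 * ℓ - 1), (q i - r i) := by
        rw [← Finset.sum_add_distrib]
        exact Finset.sum_congr rfl (key _)
      have hpq_left : ∑ i ∈ Finset.Icc 2 ℓ, (p i - q i) = 1 := by
        have : ∀ i ∈ Finset.Icc 2 ℓ, p i - q i = if i = j then 1 else 0 := by
          intro i hi
          simp only [Finset.mem_Icc] at hi
          by_cases hij : i = j
          · subst hij; rw [hqj]; simp; omega
          · rw [hq_eq i hij (by omega)]; simp [hij]
        rw [Finset.sum_congr rfl this, Finset.sum_ite_eq' (Finset.Icc 2 ℓ) j (fun _ => (1:ℕ))]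
        simp only [Finset.mem_Icc]
        split <;> omega
      have hpq_right : ∑ i ∈ Finset.Icc (ℓ + 1) (2 * ℓ - 1), (p i - q i) = 1 := by
        have : ∀ i ∈ Finset.Icc (ℓ + 1) (2 * ℓ - 1), p i - q i = if i = k then 1 else 0 := by
          intro i hi
          simp only [Finset.mem_Icc] at hi
          by_cases hik : i = k
          · subst hik; rw [hqk]; simp; omega
          · rw [hq_eq i (by omega) hik]; simp [hik]
        rw [Finset.sum_congr rfl this,
          Finset.sum_ite_eq' (Finset.Icc (ℓ + 1) (2 * ℓ - 1)) k (fun _ => (1:ℕ))]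
        simp only [Finset.mem_Icc]
        split <;> omega
      rw [hleft, hright, hpq_left, hpq_right, hr_sum]

/-- δ-Algorithm lemma: For ℓ ≥ 2 and a position p of NN(2ℓ, ℓ)
with A = B and 0 < m < s*, there is a position r ≤ p componentwise, with the
end stacks unchanged, equal total reductions on the two halves, all window
sums at least m, and minimum window sum at most m + 1. -/
theorem delta_small_algorithm (ℓ : ℕ) (hℓ : 2 ≤ ℓ) (p : ℕ → ℕ)
    (hAB : (∑ i ∈ Finset.Icc 1 ℓ, p i) = (∑ i ∈ Finset.Icc (ℓ + 1) (2 * ℓ), p i))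
    (hm : 0 < min (p 1) (p (2 * ℓ)))
    (hms : min (p 1) (p (2 * ℓ)) < sstar ℓ p) :
    ∃ r : ℕ → ℕ,
      (∀ i ∈ Finset.Icc 1 (2 * ℓ), r i ≤ p i) ∧
      r 1 = p 1 ∧ r (2 * ℓ) = p (2 * ℓ) ∧
      (∑ i ∈ Finset.Icc 1 ℓ, (p i - r i)) = (∑ i ∈ Finset.Icc (ℓ + 1) (2 * ℓ), (p i - r i)) ∧
      (∀ i, 2 ≤ i → i ≤ ℓ + 1 → min (p 1) (p (2 * ℓ)) ≤ window ℓ r i) ∧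
      sstar ℓ r ≤ min (p 1) (p (2 * ℓ)) + 1 := by
  set m := min (p 1) (p (2 * ℓ)) with hmdef
  obtain ⟨r, hr_le, hr_eq, hr_sum, hr_m, hr_m1⟩ :=
    delta_aux ℓ m hℓ (∑ i ∈ Finset.Icc 2 (2 * ℓ - 1), p i) p (le_refl _) (le_of_lt hms)
  have hr1 : r 1 = p 1 := hr_eq 1 (Or.inl (by omega))
  have hr2l : r (2 * ℓ) = p (2 * ℓ) := hr_eq (2 * ℓ) (Or.inr (by omega))
  refine ⟨r, fun i _ => hr_le i, hr1, hr2l, ?_, ?_, hr_m1⟩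
  · -- half sums
    have hIl : Finset.Icc 1 ℓ = insert 1 (Finset.Icc 2 ℓ) := by
      ext x; simp only [Finset.mem_Icc, Finset.mem_insert]; omega
    have hIr : Finset.Icc (ℓ + 1) (2 * ℓ) = insert (2 * ℓ) (Finset.Icc (ℓ + 1) (2 * ℓ - 1)) := by
      ext x; simp only [Finset.mem_Icc, Finset.mem_insert]; omega
    have h1n : (1 : ℕ) ∉ Finset.Icc 2 ℓ := by simp
    have h2n : (2 * ℓ) ∉ Finset.Icc (ℓ + 1) (2 * ℓ - 1) := by
      simp only [Finset.mem_Icc]; omega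
    rw [hIl, hIr, Finset.sum_insert h1n, Finset.sum_insert h2n, hr1, hr2l, hr_sum]
    omega
  · intro i h2 h3
    exact le_trans hr_m (sstar_le_window ℓ r h2 h3)
end

section
/- For natural numbers p_1, p_2, p_3, p_4, p_5, the conditions p_1 + p_2 = p_4 + p_5 and min(p_1, p_5) = min(p_2 + p_3, p_3 + p_4) hold if and only if there exist natural numbers a, b, c with (p_1, p_2, p_3, p_4, p_5) = (a+b, c, a, b, a+c). (That is, S_2 for the game NN(5,3) coincides with the known set of P-positions {(a+b, c, a, b, a+c)}.) -/
/-- For natural numbers p₁,...,p₅, the conditions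
p₁ + p₂ = p₄ + p₅ and min(p₁, p₅) = min(p₂ + p₃, p₃ + p₄) hold iff
(p₁,...,p₅) = (a+b, c, a, b, a+c) for some naturals a, b, c
(S_2 for NN(5,3) coincides with the known P-positions). -/
theorem s_two_nn53 (p1 p2 p3 p4 p5 : ℕ) :
    (p1 + p2 = p4 + p5 ∧ min p1 p5 = min (p2 + p3) (p3 + p4)) ↔
      ∃ a b c : ℕ, p1 = a + b ∧ p2 = c ∧ p3 = a ∧ p4 = b ∧ p5 = a + c := by
  constructor
  · rintro ⟨h1, h2⟩
    exact ⟨p3, p4, p2, by omega, rfl, rfl, rfl, by omega⟩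
  · rintro ⟨a, b, c, rfl, rfl, rfl, rfl, rfl⟩
    omega
end

section
/- Let ℓ ≥ 2 and let p = (a_1,...,a_ℓ,b_1,...,b_ℓ) be a position of NN(2ℓ, ℓ) satisfying a_{i+1} ≤ b_i for all i = 1,...,ℓ-1. Then s* = a_2 + a_3 + ... + a_ℓ, and p lies in S_ℓ if and only if a_1 = b_1 + b_2 + ... + b_{ℓ-1} and b_ℓ = a_2 + a_3 + ... + a_ℓ. -/
/-- For ℓ ≥ 2 and a position p of NN(2ℓ, ℓ) with
a_{i+1} ≤ b_i for i = 1,...,ℓ-1 (i.e. p (i+1) ≤ p (ℓ+i)), we have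
s* = a_2 + ... + a_ℓ, and p ∈ S_ℓ iff a_1 = b_1 + ... + b_{ℓ-1} and
b_ℓ = a_2 + ... + a_ℓ. -/
theorem subspace_a2_to_al (ℓ : ℕ) (hℓ : 2 ≤ ℓ) (p : ℕ → ℕ)
    (h : ∀ i, 1 ≤ i → i ≤ ℓ - 1 → p (i + 1) ≤ p (ℓ + i)) :
    sstar ℓ p = (∑ i ∈ Finset.Icc 2 ℓ, p i) ∧
    (memS ℓ p ↔
      (p 1 = (∑ i ∈ Finset.Icc (ℓ + 1) (2 * ℓ - 1), p i) ∧
       p (2 * ℓ) = (∑ i ∈ Finset.Icc 2 ℓ, p i))) := by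
  set S := ∑ i ∈ Finset.Icc 2 ℓ, p i with hS
  set T := ∑ i ∈ Finset.Icc (ℓ + 1) (2 * ℓ - 1), p i with hT
  -- window 2 = S
  have hw2 : window ℓ p 2 = S := by
    unfold window
    have : 2 + ℓ - 2 = ℓ := by omega
    rw [this]
  -- one-step monotonicity
  have hstep : ∀ i, 2 ≤ i → i ≤ ℓ → window ℓ p i ≤ window ℓ p (i + 1) := by
    intro i h2 hl
    have hle := h (i - 1) (by omega) (by omega)
    rw [show i - 1 + 1 = i by omega, show ℓ + (i - 1) = i + ℓ - 1 by omega] at hle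
    have e1 : Finset.Icc i (i + ℓ - 2) = insert i (Finset.Icc (i + 1) (i + ℓ - 2)) := by
      ext x; simp; omega
    have e2 : Finset.Icc (i + 1) (i + 1 + ℓ - 2) =
        insert (i + ℓ - 1) (Finset.Icc (i + 1) (i + ℓ - 2)) := by
      ext x; simp; omega
    unfold window
    rw [e1, e2, Finset.sum_insert (by simp), Finset.sum_insert (by simp; omega)]
    exact Nat.add_le_add_right hle _
  -- window 2 is minimal on [2, ℓ+1]
  have hmono : ∀ k, 2 ≤ k → k ≤ ℓ + 1 → window ℓ p 2 ≤ window ℓ p k := by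
    intro k
    induction k with
    | zero => omega
    | succ n ih =>
      intro h2 hl
      rcases Nat.lt_or_ge n 2 with hn | hn
      · have : n + 1 = 2 := by omega
        rw [this]
      · exact le_trans (ih hn (by omega)) (hstep n hn (by omega))
  -- sstar = S
  have hsstar : sstar ℓ p = S := by
    have hmem : S ∈ {x | ∃ i, 2 ≤ i ∧ i ≤ ℓ + 1 ∧ x = window ℓ p i} :=
      ⟨2, le_refl 2, by omega, hw2.symm⟩
    refine le_antisymm (Nat.sInf_le hmem) ?_
    refine le_csInf ⟨S, hmem⟩ ?_
    rintro x ⟨i, h2, hl, rfl⟩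
    rw [← hw2]; exact hmono i h2 hl
  refine ⟨hsstar, ?_⟩
  -- sum decompositions
  have hA : (∑ i ∈ Finset.Icc 1 ℓ, p i) = p 1 + S := by
    have e : Finset.Icc 1 ℓ = insert 1 (Finset.Icc 2 ℓ) := by ext x; simp; omega
    rw [e, Finset.sum_insert (by simp)]
  have hB : (∑ i ∈ Finset.Icc (ℓ + 1) (2 * ℓ), p i) = T + p (2 * ℓ) := by
    have e : Finset.Icc (ℓ + 1) (2 * ℓ) =
        insert (2 * ℓ) (Finset.Icc (ℓ + 1) (2 * ℓ - 1)) := by ext x; simp; omega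
    rw [e, Finset.sum_insert (by simp; omega), hT, Nat.add_comm]
  -- S ≤ T termwise
  have hST : S ≤ T := by
    have e : Finset.Icc (ℓ + 1) (2 * ℓ - 1) =
        Finset.map (addLeftEmbedding (ℓ - 1)) (Finset.Icc 2 ℓ) := by
      rw [Finset.map_add_left_Icc]
      congr 1 <;> omega
    rw [hS, hT, e, Finset.sum_map]
    apply Finset.sum_le_sum
    intro j hj
    simp only [Finset.mem_Icc] at hj
    have hle := h (j - 1) (by omega) (by omega)
    rw [show j - 1 + 1 = j by omega] at hle
    simpa [addLeftEmbedding_apply, show ℓ - 1 + j = ℓ + (j - 1) by omega] using hle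
  unfold memS
  rw [hA, hB, hsstar]
  omega
end

section
/- Let ℓ ≥ 2 and let p = (a_1,...,a_ℓ,b_1,...,b_ℓ) be a position of NN(2ℓ, ℓ) satisfying b_1 < a_2 and a_{i+1} ≤ b_i for all i = 2,...,ℓ-1. Then s* = b_1 + a_3 + a_4 + ... + a_ℓ, and consequently p lies in S_ℓ if and only if A = B and min(a_1, b_ℓ) = b_1 + a_3 + a_4 + ... + a_ℓ. -/
/-!
Sliding the window from `i` to `i + 1` trades `p i` for `p (i + ℓ - 1)`. Hence `s_2 ≥ s_3`
because `b_1 < a_2`, and `s_3 ≤ s_4 ≤ ⋯ ≤ s_{ℓ+1}` because `a_{i+1} ≤ b_i`, so `s* = s_3`,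
and `s_3 = a_3 + ⋯ + a_ℓ + b_1`.
-/

namespace window

variable {ℓ : ℕ} {p : ℕ → ℕ}

theorem add_last (hℓ : 2 ≤ ℓ) (i : ℕ) :
    window ℓ p i + p (i + ℓ - 1) = window ℓ p (i + 1) + p i := by
  obtain ⟨k, rfl⟩ : ∃ k, ℓ = k + 2 := ⟨ℓ - 2, by omega⟩
  have hlast : i + (k + 2) - 1 = i + k + 1 := by omega
  simp only [window, hlast, show i + (k + 2) - 2 = i + k by omega,
    show i + 1 + (k + 2) - 2 = i + k + 1 by omega]
  rw [← Finset.sum_Icc_succ_top (by omega),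
    ← Finset.insert_Icc_add_one_left_eq_Icc (by omega : i ≤ i + k + 1),
    Finset.sum_insert (by simp), add_comm]

theorem le_succ_iff (hℓ : 2 ≤ ℓ) (i : ℕ) :
    window ℓ p i ≤ window ℓ p (i + 1) ↔ p i ≤ p (i + ℓ - 1) := by
  have := add_last (p := p) hℓ i
  omega

theorem three_eq (hℓ : 2 ≤ ℓ) :
    window ℓ p 3 = p (ℓ + 1) + ∑ i ∈ Finset.Icc 3 ℓ, p i := by
  rw [window, show 3 + ℓ - 2 = ℓ + 1 by omega, Finset.sum_Icc_succ_top (by omega), add_comm]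

theorem le_of_forall_le_succ {a b : ℕ}
    (hstep : ∀ i, a ≤ i → i < b → window ℓ p i ≤ window ℓ p (i + 1))
    {i : ℕ} (hai : a ≤ i) (hib : i ≤ b) : window ℓ p a ≤ window ℓ p i := by
  induction i, hai using Nat.le_induction with
  | base => rfl
  | succ i hai ih => exact (ih (by omega)).trans (hstep i hai (by omega))

end window

theorem sstar_eq_window {ℓ : ℕ} {p : ℕ → ℕ} {j : ℕ} (h2j : 2 ≤ j) (hjℓ : j ≤ ℓ + 1)
    (hmin : ∀ i, 2 ≤ i → i ≤ ℓ + 1 → window ℓ p j ≤ window ℓ p i) :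
    sstar ℓ p = window ℓ p j := by
  have hmem : window ℓ p j ∈ {x | ∃ i, 2 ≤ i ∧ i ≤ ℓ + 1 ∧ x = window ℓ p i} :=
    ⟨j, h2j, hjℓ, rfl⟩
  refine le_antisymm (Nat.sInf_le hmem) (le_csInf ⟨_, hmem⟩ ?_)
  rintro x ⟨i, h2i, hiℓ, rfl⟩
  exact hmin i h2i hiℓ

/-- For ℓ ≥ 2 and a position p of NN(2ℓ, ℓ) with b_1 < a_2
(i.e. p (ℓ+1) < p 2) and a_{i+1} ≤ b_i for i = 2,...,ℓ-1 (i.e.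
p (i+1) ≤ p (ℓ+i)), we have s* = b_1 + a_3 + ... + a_ℓ, and consequently
p ∈ S_ℓ iff A = B and min(a_1, b_ℓ) = b_1 + a_3 + ... + a_ℓ. -/
theorem subspace_a3_to_b1 (ℓ : ℕ) (hℓ : 2 ≤ ℓ) (p : ℕ → ℕ)
    (h1 : p (ℓ + 1) < p 2)
    (h : ∀ i, 2 ≤ i → i ≤ ℓ - 1 → p (i + 1) ≤ p (ℓ + i)) :
    sstar ℓ p = p (ℓ + 1) + (∑ i ∈ Finset.Icc 3 ℓ, p i) ∧
    (memS ℓ p ↔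
      ((∑ i ∈ Finset.Icc 1 ℓ, p i) = (∑ i ∈ Finset.Icc (ℓ + 1) (2 * ℓ), p i) ∧
       min (p 1) (p (2 * ℓ)) = p (ℓ + 1) + (∑ i ∈ Finset.Icc 3 ℓ, p i))) := by
  have hs3_le_s2 : window ℓ p 3 ≤ window ℓ p 2 := by
    have := window.add_last (p := p) hℓ 2
    rw [show 2 + ℓ - 1 = ℓ + 1 by omega] at this
    exact (by omega : window ℓ p (2 + 1) ≤ window ℓ p 2)
  have hstep : ∀ i, 3 ≤ i → i < ℓ + 1 → window ℓ p i ≤ window ℓ p (i + 1) := by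
    intro i h3i hiℓ
    rw [window.le_succ_iff hℓ]
    simpa [show i - 1 + 1 = i by omega, show ℓ + (i - 1) = i + ℓ - 1 by omega]
      using h (i - 1) (by omega) (by omega)
  have hsstar : sstar ℓ p = window ℓ p 3 := by
    refine sstar_eq_window (by omega) (by omega) fun i h2i hiℓ => ?_
    rcases h2i.eq_or_lt with rfl | h3i
    · exact hs3_le_s2
    · exact window.le_of_forall_le_succ hstep h3i hiℓ
  rw [hsstar, window.three_eq hℓ]
  exact ⟨rfl, by rw [memS, hsstar, window.three_eq hℓ]⟩
end

section
/- (Winning endpoint move, Case 1.1 with δ ≥ Δ.) Let ℓ ≥ 2 and let p = (a_1,...,a_ℓ,b_1,...,b_ℓ) be a position of NN(2ℓ, ℓ) with Δ := A - B > 0, m = a_1 ≤ b_ℓ, s* ≤ m, and δ := m - s* ≥ Δ. Define p' by p'_1 = a_1 - δ, p'_{2ℓ} = b_ℓ - (δ - Δ), and p'_i = p_i for all other i. Then p' is a legal endpoint move from p (it is nonnegative, componentwise at most p, differs from p, and changes only positions 1 and 2ℓ), and p' lies in S_ℓ. -/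
/-- A-side sum A = a_1 + ... + a_ℓ. -/
def Asum (ℓ : ℕ) (p : ℕ → ℕ) : ℕ := ∑ i ∈ Finset.Icc 1 ℓ, p i

/-- B-side sum B = b_1 + ... + b_ℓ. -/
def Bsum (ℓ : ℕ) (p : ℕ → ℕ) : ℕ := ∑ i ∈ Finset.Icc (ℓ + 1) (2 * ℓ), p i

/-- winning endpoint move, Case 1.1 with δ ≥ Δ: For ℓ ≥ 2 and a
position p of NN(2ℓ, ℓ) with Δ = A - B > 0, m = a_1 ≤ b_ℓ, s* ≤ m, and
δ = m - s* ≥ Δ, the position p' with p'_1 = a_1 - δ, p'_{2ℓ} = b_ℓ - (δ - Δ)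
and all other stacks unchanged is a legal endpoint move from p (componentwise
at most p, differs from p, changes only positions 1 and 2ℓ) and lies in S_ℓ. -/
theorem endpoint_move_case_one_one (ℓ : ℕ) (hℓ : 2 ≤ ℓ) (p : ℕ → ℕ)
    (hΔ : Bsum ℓ p < Asum ℓ p)
    (hm : p 1 ≤ p (2 * ℓ))
    (hs : sstar ℓ p ≤ p 1)
    (hδΔ : Asum ℓ p - Bsum ℓ p ≤ p 1 - sstar ℓ p) :
    ∃ p' : ℕ → ℕ,
      p' = (fun i => if i = 1 then p 1 - (p 1 - sstar ℓ p)
        else if i = 2 * ℓ then p (2 * ℓ) - ((p 1 - sstar ℓ p) - (Asum ℓ p - Bsum ℓ p))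
        else p i) ∧
      LegalMove (2 * ℓ) ℓ p p' ∧
      (∀ j, p' j < p j → j = 1 ∨ j = 2 * ℓ) ∧
      memS ℓ p' := by
  
  have h2l1 : (2*ℓ) ≠ 1 := by omega
  set p' : ℕ → ℕ := (fun i => if i = 1 then p 1 - (p 1 - sstar ℓ p)
        else if i = 2 * ℓ then p (2 * ℓ) - ((p 1 - sstar ℓ p) - (Asum ℓ p - Bsum ℓ p))
        else p i) with hp'
  have hp'1 : p' 1 = sstar ℓ p := by simp [hp', Nat.sub_sub_self hs]
  have hp'2l : p' (2*ℓ) = p (2*ℓ) - ((p 1 - sstar ℓ p) - (Asum ℓ p - Bsum ℓ p)) := by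
    simp [hp', h2l1]
  have hp'other : ∀ j, j ≠ 1 → j ≠ 2*ℓ → p' j = p j := by
    intro j h1 h2; simp [hp', h1, h2]
  have hle : ∀ j, p' j ≤ p j := by
    intro j
    by_cases h1 : j = 1
    · subst h1; rw [hp'1]; exact hs
    by_cases h2 : j = 2*ℓ
    · subst h2; rw [hp'2l]; exact Nat.sub_le _ _
    · rw [hp'other j h1 h2]
  have hwin : ∀ i, 2 ≤ i → i ≤ ℓ + 1 → window ℓ p' i = window ℓ p i := by
    intro i h2 h3
    apply Finset.sum_congr rfl
    intro j hj
    simp only [Finset.mem_Icc] at hj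
    exact hp'other j (by omega) (by omega)
  have hsstar : sstar ℓ p' = sstar ℓ p := by
    unfold sstar
    congr 1
    ext x
    constructor
    · rintro ⟨i, h2, h3, rfl⟩; exact ⟨i, h2, h3, hwin i h2 h3⟩
    · rintro ⟨i, h2, h3, rfl⟩; exact ⟨i, h2, h3, (hwin i h2 h3).symm⟩
  have hsplitA : Finset.Icc 1 ℓ = insert 1 (Finset.Icc 2 ℓ) := by
    ext x; simp [Finset.mem_Icc]; omega
  have hsplitB : Finset.Icc (ℓ+1) (2*ℓ) = insert (2*ℓ) (Finset.Icc (ℓ+1) (2*ℓ-1)) := by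
    ext x; simp [Finset.mem_Icc]; omega
  have hA : Asum ℓ p = p 1 + ∑ i ∈ Finset.Icc 2 ℓ, p i := by
    unfold Asum; rw [hsplitA, Finset.sum_insert (by simp [Finset.mem_Icc])]
  have hB : Bsum ℓ p = p (2*ℓ) + ∑ i ∈ Finset.Icc (ℓ+1) (2*ℓ-1), p i := by
    unfold Bsum; rw [hsplitB, Finset.sum_insert (by simp [Finset.mem_Icc]; omega)]
  have hA' : (∑ i ∈ Finset.Icc 1 ℓ, p' i) = p' 1 + ∑ i ∈ Finset.Icc 2 ℓ, p i := by
    rw [hsplitA, Finset.sum_insert (by simp [Finset.mem_Icc])]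
    congr 1
    apply Finset.sum_congr rfl
    intro j hj
    simp only [Finset.mem_Icc] at hj
    exact hp'other j (by omega) (by omega)
  have hB' : (∑ i ∈ Finset.Icc (ℓ+1) (2*ℓ), p' i)
      = p' (2*ℓ) + ∑ i ∈ Finset.Icc (ℓ+1) (2*ℓ-1), p i := by
    rw [hsplitB, Finset.sum_insert (by simp [Finset.mem_Icc]; omega)]
    congr 1
    apply Finset.sum_congr rfl
    intro j hj
    simp only [Finset.mem_Icc] at hj
    exact hp'other j (by omega) (by omega)
  refine ⟨p', hp', ⟨?_, ?_, ?_⟩, ?_, ?_, ?_⟩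
  · intro j _; exact hle j
  · refine ⟨1, ?_, ?_⟩
    · simp [Finset.mem_Icc]; omega
    · rw [hp'1]; omega
  · refine ⟨{1, 2*ℓ}, Or.inr rfl, ?_⟩
    intro j _ hj
    by_cases h1 : j = 1
    · simp [h1]
    by_cases h2 : j = 2*ℓ
    · simp [h2]
    · rw [hp'other j h1 h2] at hj; omega
  · intro j hj
    by_cases h1 : j = 1
    · exact Or.inl h1
    by_cases h2 : j = 2*ℓ
    · exact Or.inr h2
    · rw [hp'other j h1 h2] at hj; omega
  · rw [hA', hB', hp'1, hp'2l]
    omega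
  · rw [hsstar, hp'1, hp'2l]
    omega
end

section
/- (Winning endpoint move, Case 1.2.) Let ℓ ≥ 2 and let p = (a_1,...,a_ℓ,b_1,...,b_ℓ) be a position of NN(2ℓ, ℓ) with Δ := A - B > 0, m = b_ℓ ≤ a_1, s* ≤ m, δ := m - s*, and a_1 ≥ m + Δ. Define p' by p'_1 = a_1 - Δ - δ, p'_{2ℓ} = b_ℓ - δ, and p'_i = p_i for all other i. Then p' is a legal endpoint move from p (it is nonnegative, componentwise at most p, differs from p, and changes only positions 1 and 2ℓ), and p' lies in S_ℓ. -/
/-- winning endpoint move, Case 1.2: For ℓ ≥ 2 and a position p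
of NN(2ℓ, ℓ) with Δ = A - B > 0, m = b_ℓ ≤ a_1, s* ≤ m, δ = m - s*, and
a_1 ≥ m + Δ, the position p' with p'_1 = a_1 - Δ - δ, p'_{2ℓ} = b_ℓ - δ and
all other stacks unchanged is a legal endpoint move from p (componentwise at
most p, differs from p, changes only positions 1 and 2ℓ) and lies in S_ℓ. -/
theorem endpoint_move_case_one_two (ℓ : ℕ) (hℓ : 2 ≤ ℓ) (p : ℕ → ℕ)
    (hΔ : Bsum ℓ p < Asum ℓ p)
    (hm : p (2 * ℓ) ≤ p 1)
    (hs : sstar ℓ p ≤ p (2 * ℓ))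
    (ha1 : p (2 * ℓ) + (Asum ℓ p - Bsum ℓ p) ≤ p 1) :
    ∃ p' : ℕ → ℕ,
      p' = (fun i => if i = 1 then p 1 - (Asum ℓ p - Bsum ℓ p) - (p (2 * ℓ) - sstar ℓ p)
        else if i = 2 * ℓ then p (2 * ℓ) - (p (2 * ℓ) - sstar ℓ p)
        else p i) ∧
      LegalMove (2 * ℓ) ℓ p p' ∧
      (∀ j, p' j < p j → j = 1 ∨ j = 2 * ℓ) ∧
      memS ℓ p' := by
  obtain ⟨p', hp'⟩ : ∃ p' : ℕ → ℕ, p' =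
      (fun i => if i = 1 then p 1 - (Asum ℓ p - Bsum ℓ p) - (p (2 * ℓ) - sstar ℓ p)
        else if i = 2 * ℓ then p (2 * ℓ) - (p (2 * ℓ) - sstar ℓ p)
        else p i) := ⟨_, rfl⟩
  have hp'1 : p' 1 = p 1 - (Asum ℓ p - Bsum ℓ p) - (p (2 * ℓ) - sstar ℓ p) := by
    rw [hp']; simp
  have hp'2 : p' (2 * ℓ) = sstar ℓ p := by
    rw [hp']
    have : ¬ (2 * ℓ = 1) := by omega
    simp [this]
    omega
  have hp'o : ∀ j, j ≠ 1 → j ≠ 2 * ℓ → p' j = p j := by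
    intro j h1 h2; rw [hp']; simp only [if_neg h1, if_neg h2]
  -- window sums are unchanged
  have hwin : ∀ i, 2 ≤ i → i ≤ ℓ + 1 → window ℓ p' i = window ℓ p i := by
    intro i h2 hi
    unfold window
    refine Finset.sum_congr rfl ?_
    intro j hj
    rw [Finset.mem_Icc] at hj
    exact hp'o j (by omega) (by omega)
  have hss : sstar ℓ p' = sstar ℓ p := by
    unfold sstar
    congr 1
    ext x
    constructor
    · rintro ⟨i, h2, hi, rfl⟩; exact ⟨i, h2, hi, (hwin i h2 hi) ▸ rfl⟩
    · rintro ⟨i, h2, hi, rfl⟩; exact ⟨i, h2, hi, (hwin i h2 hi).symm⟩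
  -- sum decompositions
  have h1mem : (1 : ℕ) ∈ Finset.Icc 1 ℓ := by simp; omega
  have h2mem : 2 * ℓ ∈ Finset.Icc (ℓ + 1) (2 * ℓ) := by simp; omega
  have hrA : ∀ q : ℕ → ℕ, (∑ i ∈ Finset.Icc 1 ℓ, q i)
      = q 1 + ∑ i ∈ (Finset.Icc 1 ℓ).erase 1, q i := by
    intro q; exact (Finset.add_sum_erase _ q h1mem).symm
  have hrB : ∀ q : ℕ → ℕ, (∑ i ∈ Finset.Icc (ℓ + 1) (2 * ℓ), q i)
      = q (2 * ℓ) + ∑ i ∈ (Finset.Icc (ℓ + 1) (2 * ℓ)).erase (2 * ℓ), q i := by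
    intro q; exact (Finset.add_sum_erase _ q h2mem).symm
  have heA : ∑ i ∈ (Finset.Icc 1 ℓ).erase 1, p' i
      = ∑ i ∈ (Finset.Icc 1 ℓ).erase 1, p i := by
    refine Finset.sum_congr rfl ?_
    intro j hj
    rw [Finset.mem_erase, Finset.mem_Icc] at hj
    exact hp'o j hj.1 (by omega)
  have heB : ∑ i ∈ (Finset.Icc (ℓ + 1) (2 * ℓ)).erase (2 * ℓ), p' i
      = ∑ i ∈ (Finset.Icc (ℓ + 1) (2 * ℓ)).erase (2 * ℓ), p i := by
    refine Finset.sum_congr rfl ?_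
    intro j hj
    rw [Finset.mem_erase, Finset.mem_Icc] at hj
    exact hp'o j (by omega) hj.1
  have hAp : Asum ℓ p = p 1 + ∑ i ∈ (Finset.Icc 1 ℓ).erase 1, p i := hrA p
  have hBp : Bsum ℓ p = p (2 * ℓ) + ∑ i ∈ (Finset.Icc (ℓ + 1) (2 * ℓ)).erase (2 * ℓ), p i :=
    hrB p
  refine ⟨p', hp', ⟨?_, ⟨1, ?_, ?_⟩, ⟨{1, 2 * ℓ}, Or.inr rfl, ?_⟩⟩, ?_, ?_, ?_⟩
  · -- weak decrease
    intro j _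
    by_cases h1 : j = 1
    · subst h1; rw [hp'1]; omega
    by_cases h2 : j = 2 * ℓ
    · subst h2; rw [hp'2]; omega
    · rw [hp'o j h1 h2]
  · simp; omega
  · rw [hp'1]; omega
  · -- decreases contained in {1, 2ℓ}
    intro j _ hlt
    by_cases h1 : j = 1
    · simp [h1]
    by_cases h2 : j = 2 * ℓ
    · simp [h2]
    · rw [hp'o j h1 h2] at hlt; omega
  · -- only positions 1 and 2ℓ change
    intro j hlt
    by_cases h1 : j = 1
    · exact Or.inl h1
    by_cases h2 : j = 2 * ℓ
    · exact Or.inr h2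
    · rw [hp'o j h1 h2] at hlt; omega
  · -- SE
    rw [hrA p', hrB p', heA, heB, hp'1, hp'2]
    omega
  · -- ME
    rw [hss, hp'1, hp'2]
    omega
end

section
/- (Winning endpoint move, Case 1.3 with δ ≥ Δ.) Let ℓ ≥ 2 and let p = (a_1,...,a_ℓ,b_1,...,b_ℓ) be a position of NN(2ℓ, ℓ) with Δ := A - B > 0, m = b_ℓ < a_1 < m + Δ, s* ≤ m, and δ := m - s* ≥ Δ. Set Δ' := Δ + m - a_1 (so 0 < Δ' < Δ ≤ δ). Define p' by p'_1 = b_ℓ - δ, p'_{2ℓ} = b_ℓ - (δ - Δ'), and p'_i = p_i for all other i. Then p' is a legal endpoint move from p (it is nonnegative, componentwise at most p, differs from p, and changes only positions 1 and 2ℓ), and p' lies in S_ℓ. -/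
/-- winning endpoint move, Case 1.3 with δ ≥ Δ: For ℓ ≥ 2 and a
position p of NN(2ℓ, ℓ) with Δ = A - B > 0, m = b_ℓ < a_1 < m + Δ, s* ≤ m,
and δ = m - s* ≥ Δ, setting Δ' = Δ + m - a_1, the position p' with
p'_1 = b_ℓ - δ, p'_{2ℓ} = b_ℓ - (δ - Δ') and all other stacks unchanged is a
legal endpoint move from p (componentwise at most p, differs from p, changes
only positions 1 and 2ℓ) and lies in S_ℓ. -/
theorem endpoint_move_case_one_three (ℓ : ℕ) (hℓ : 2 ≤ ℓ) (p : ℕ → ℕ)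
    (hΔ : Bsum ℓ p < Asum ℓ p)
    (hm : p (2 * ℓ) < p 1)
    (ha1 : p 1 < p (2 * ℓ) + (Asum ℓ p - Bsum ℓ p))
    (hs : sstar ℓ p ≤ p (2 * ℓ))
    (hδΔ : Asum ℓ p - Bsum ℓ p ≤ p (2 * ℓ) - sstar ℓ p) :
    ∃ p' : ℕ → ℕ,
      p' = (fun i => if i = 1 then p (2 * ℓ) - (p (2 * ℓ) - sstar ℓ p)
        else if i = 2 * ℓ then
          p (2 * ℓ) - ((p (2 * ℓ) - sstar ℓ p) - ((Asum ℓ p - Bsum ℓ p) + p (2 * ℓ) - p 1))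
        else p i) ∧
      LegalMove (2 * ℓ) ℓ p p' ∧
      (∀ j, p' j < p j → j = 1 ∨ j = 2 * ℓ) ∧
      memS ℓ p' := by
  set p' : ℕ → ℕ := (fun i => if i = 1 then p (2 * ℓ) - (p (2 * ℓ) - sstar ℓ p)
        else if i = 2 * ℓ then
          p (2 * ℓ) - ((p (2 * ℓ) - sstar ℓ p) - ((Asum ℓ p - Bsum ℓ p) + p (2 * ℓ) - p 1))
        else p i) with hp'
  have hne : (2 * ℓ) ≠ 1 := by omega
  have hp'1 : p' 1 = p (2 * ℓ) - (p (2 * ℓ) - sstar ℓ p) := by simp [hp']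
  have hp'n : p' (2 * ℓ) =
      p (2 * ℓ) - ((p (2 * ℓ) - sstar ℓ p) - ((Asum ℓ p - Bsum ℓ p) + p (2 * ℓ) - p 1)) := by
    simp [hp', hne]
  have hp'other : ∀ j, j ≠ 1 → j ≠ 2 * ℓ → p' j = p j := by
    intro j h1 h2; simp [hp', h1, h2]
  have hwin : ∀ i, 2 ≤ i → i ≤ ℓ + 1 → window ℓ p' i = window ℓ p i := by
    intro i h1 h2
    unfold window
    refine Finset.sum_congr rfl ?_
    intro j hj
    rw [Finset.mem_Icc] at hj
    exact hp'other j (by omega) (by omega)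
  have hss : sstar ℓ p' = sstar ℓ p := by
    unfold sstar
    congr 1
    ext x
    constructor
    · rintro ⟨i, h1, h2, rfl⟩; exact ⟨i, h1, h2, (hwin i h1 h2)⟩
    · rintro ⟨i, h1, h2, rfl⟩; exact ⟨i, h1, h2, (hwin i h1 h2).symm⟩
  have hIA : Finset.Icc 1 ℓ = insert 1 (Finset.Icc 2 ℓ) := by
    ext j; simp [Finset.mem_Icc]; omega
  have hIB : Finset.Icc (ℓ + 1) (2 * ℓ) = insert (2 * ℓ) (Finset.Icc (ℓ + 1) (2 * ℓ - 1)) := by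
    ext j; simp [Finset.mem_Icc]; omega
  have h1notin : (1 : ℕ) ∉ Finset.Icc 2 ℓ := by simp
  have hnnotin : (2 * ℓ) ∉ Finset.Icc (ℓ + 1) (2 * ℓ - 1) := by
    simp [Finset.mem_Icc]; omega
  have hA' : Asum ℓ p' = p' 1 + ∑ i ∈ Finset.Icc 2 ℓ, p i := by
    unfold Asum
    rw [hIA, Finset.sum_insert h1notin]
    congr 1
    refine Finset.sum_congr rfl ?_
    intro j hj
    rw [Finset.mem_Icc] at hj
    exact hp'other j (by omega) (by omega)
  have hA : Asum ℓ p = p 1 + ∑ i ∈ Finset.Icc 2 ℓ, p i := by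
    unfold Asum
    rw [hIA, Finset.sum_insert h1notin]
  have hB' : Bsum ℓ p' = p' (2 * ℓ) + ∑ i ∈ Finset.Icc (ℓ + 1) (2 * ℓ - 1), p i := by
    unfold Bsum
    rw [hIB, Finset.sum_insert hnnotin]
    congr 1
    refine Finset.sum_congr rfl ?_
    intro j hj
    rw [Finset.mem_Icc] at hj
    exact hp'other j (by omega) (by omega)
  have hB : Bsum ℓ p = p (2 * ℓ) + ∑ i ∈ Finset.Icc (ℓ + 1) (2 * ℓ - 1), p i := by
    unfold Bsum
    rw [hIB, Finset.sum_insert hnnotin]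
  refine ⟨p', rfl, ⟨?_, ?_, ?_⟩, ?_, ?_, ?_⟩
  · -- weakly decreasing
    intro j hj
    by_cases h1 : j = 1
    · subst h1; rw [hp'1]; omega
    · by_cases h2 : j = 2 * ℓ
      · subst h2; rw [hp'n]; omega
      · rw [hp'other j h1 h2]
  · -- strict decrease at 1
    refine ⟨1, ?_, ?_⟩
    · rw [Finset.mem_Icc]; omega
    · rw [hp'1]; omega
  · -- allowed move set {1, 2ℓ}
    refine ⟨{1, 2 * ℓ}, Or.inr rfl, ?_⟩
    intro j _ hlt
    by_cases h1 : j = 1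
    · simp [h1]
    · by_cases h2 : j = 2 * ℓ
      · simp [h2]
      · rw [hp'other j h1 h2] at hlt; omega
  · -- changed positions
    intro j hlt
    by_cases h1 : j = 1
    · exact Or.inl h1
    · by_cases h2 : j = 2 * ℓ
      · exact Or.inr h2
      · rw [hp'other j h1 h2] at hlt; omega
  · -- SE
    have : Asum ℓ p' = Bsum ℓ p' := by
      rw [hA', hB', hp'1, hp'n]
      omega
    simpa [Asum, Bsum] using this
  · -- ME
    rw [hss, hp'1, hp'n]
    omega
end
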